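/- arXiv:2504.09300 — 2 statements merged into one kernel-verified Lean document; each statement's English description precedes it below -/
import Mathlib

section
/- For every board B ⊆ [n]×[n] and every integer i ≥ 0: h_{WR,i−1}(B) + h_{WC,i−1}(B) − 2·h_{Z,i−1}(B) + 2·h_{S,i−1}(B) + (i(i+1)/2)·h_{i+1}(B) ≥ 0. -/
/-- A set of cells is non-attacking if its cells have pairwise distinct rows
and pairwise distinct columns. -/
def nonattacking {m n : ℕ} (s : Finset (Fin m × Fin n)) : Prop :=
  ∀ p ∈ s, ∀ p' ∈ s, p ≠ p' → p.1 ≠ p'.1 ∧ p.2 ≠ p'.2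

/-- The classical hit number: the number of non-attacking `n`-element subsets `σ` of
`[n]×[n]` with `#(σ ∩ B) = i`. -/
noncomputable def hit {n : ℕ} (B : Finset (Fin n × Fin n)) (i : ℕ) : ℕ :=
  Nat.card {σ : Finset (Fin n × Fin n) // nonattacking σ ∧ σ.card = n ∧ (σ ∩ B).card = i}

/-- The generalized hit number `h_{Z,i}(B)` for the Z graph.  (It is `0` for `i < 0`.) -/
noncomputable def hitZ {n : ℕ} (B : Finset (Fin n × Fin n)) (i : ℤ) : ℕ :=
  Nat.card {σ : Finset (Fin n × Fin n) //
    ∃ (a d b c : Fin n) (τ : Finset (Fin n × Fin n)),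
      a ≠ d ∧ b ≠ c ∧ σ = {(a, b), (a, c), (d, c)} ∪ τ ∧
      ({(a, b), (a, c), (d, c)} : Finset (Fin n × Fin n)) ⊆ B ∧
      nonattacking τ ∧ τ.card = n - 2 ∧
      (∀ p ∈ τ, p.1 ≠ a ∧ p.1 ≠ d ∧ p.2 ≠ b ∧ p.2 ≠ c) ∧
      ((τ ∩ B).card : ℤ) = i}

/-- The generalized hit number `h_{S,i}(B)` for the shoelace graph `K_{2,2}`. -/
noncomputable def hitS {n : ℕ} (B : Finset (Fin n × Fin n)) (i : ℤ) : ℕ :=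
  Nat.card {σ : Finset (Fin n × Fin n) //
    ∃ (a d b c : Fin n) (τ : Finset (Fin n × Fin n)),
      a ≠ d ∧ b ≠ c ∧ σ = (({a, d} : Finset (Fin n)) ×ˢ ({b, c} : Finset (Fin n))) ∪ τ ∧
      (({a, d} : Finset (Fin n)) ×ˢ ({b, c} : Finset (Fin n))) ⊆ B ∧
      nonattacking τ ∧ τ.card = n - 2 ∧
      (∀ p ∈ τ, p.1 ≠ a ∧ p.1 ≠ d ∧ p.2 ≠ b ∧ p.2 ≠ c) ∧
      ((τ ∩ B).card : ℤ) = i}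

/-- The generalized hit number `h_{WR,i}(B)` for the wedge of two rows. -/
noncomputable def hitWR {n : ℕ} (B : Finset (Fin n × Fin n)) (i : ℤ) : ℕ :=
  Nat.card {σ : Finset (Fin n × Fin n) //
    ∃ (a d c : Fin n) (τ : Finset (Fin n × Fin n)),
      a ≠ d ∧ σ = {(a, c), (d, c)} ∪ τ ∧
      ({(a, c), (d, c)} : Finset (Fin n × Fin n)) ⊆ B ∧
      nonattacking τ ∧ τ.card = n - 2 ∧
      (∀ p ∈ τ, p.1 ≠ a ∧ p.1 ≠ d ∧ p.2 ≠ c) ∧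
      ((τ ∩ B).card : ℤ) = i}

/-- The generalized hit number `h_{WC,i}(B)` for the wedge of two columns. -/
noncomputable def hitWC {n : ℕ} (B : Finset (Fin n × Fin n)) (i : ℤ) : ℕ :=
  Nat.card {σ : Finset (Fin n × Fin n) //
    ∃ (a b c : Fin n) (τ : Finset (Fin n × Fin n)),
      b ≠ c ∧ σ = {(a, b), (a, c)} ∪ τ ∧
      ({(a, b), (a, c)} : Finset (Fin n × Fin n)) ⊆ B ∧
      nonattacking τ ∧ τ.card = n - 2 ∧
      (∀ p ∈ τ, p.1 ≠ a ∧ p.2 ≠ b ∧ p.2 ≠ c) ∧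
      ((τ ∩ B).card : ℤ) = i}

/-!
Each configuration counted by `hitZ`, `hitS`, `hitWR`, `hitWC` is a rook placement `τ` of size
`n - 2` together with a pattern in the `2 × 2` window `{a, d} × {b, c}` of rows and columns that
`τ` leaves free, and the configuration determines `τ` and the window. Deleting the cell `(a, b)`
of a Z-pattern leaves a wedge in column `c`. Two Z's complete the same wedge only when the whole
window lies in `B`; the one with `d < a` is then sent to the full window instead, together with a
bit recording which column is `b`. Hence `h_Z ≤ h_WR + 2 h_S`, and by transposition
`h_Z ≤ h_WC + 2 h_S`. Replacing the full window by either of its diagonals yields a rook placement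
with `i + 1` hits and a marked pair of hits, so `2 h_S ≤ (i + 1).choose 2 * h_{i+1}`. Adding the
three inequalities gives the claim.
-/

open Finset

variable {m n : ℕ}

namespace nonattacking

variable {s t : Finset (Fin m × Fin n)}

theorem eq_of_fst_eq (h : nonattacking s) {p q : Fin m × Fin n} (hp : p ∈ s) (hq : q ∈ s)
    (e : p.1 = q.1) : p = q :=
  by_contra fun hne => (h p hp q hq hne).1 e

theorem eq_of_snd_eq (h : nonattacking s) {p q : Fin m × Fin n} (hp : p ∈ s) (hq : q ∈ s)
    (e : p.2 = q.2) : p = q :=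
  by_contra fun hne => (h p hp q hq hne).2 e

theorem image_swap (h : nonattacking s) : nonattacking (s.image Prod.swap) := by
  intro p' hp' q' hq' hne
  obtain ⟨p, hp, rfl⟩ := mem_image.1 hp'
  obtain ⟨q, hq, rfl⟩ := mem_image.1 hq'
  exact (h p hp q hq (ne_of_apply_ne _ hne)).symm

theorem union (hs : nonattacking s) (ht : nonattacking t)
    (hst : ∀ p ∈ s, ∀ q ∈ t, p.1 ≠ q.1 ∧ p.2 ≠ q.2) : nonattacking (s ∪ t) := by
  intro p hp q hq hne
  rcases mem_union.1 hp with hp | hp <;> rcases mem_union.1 hq with hq | hq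
  · exact hs p hp q hq hne
  · exact hst p hp q hq
  · exact (hst q hq p hp).imp Ne.symm Ne.symm
  · exact ht p hp q hq hne

theorem card_add_card_le (h : nonattacking s) {C : Finset (Fin n)} (hC : ∀ p ∈ s, p.2 ∉ C) :
    s.card + C.card ≤ n := by
  classical
  have hcard : (s.image Prod.snd).card = s.card :=
    card_image_of_injOn fun p hp q hq e => h.eq_of_snd_eq hp hq e
  have hdisj : Disjoint (s.image Prod.snd) C := disjoint_left.2 fun y hy => by
    obtain ⟨p, hp, rfl⟩ := mem_image.1 hy
    exact hC p hp
  rw [← hcard, ← card_union_of_disjoint hdisj]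
  simpa using card_le_univ (s.image Prod.snd ∪ C)

end nonattacking

theorem nonattacking_pair {p q : Fin m × Fin n} (h₁ : p.1 ≠ q.1) (h₂ : p.2 ≠ q.2) :
    nonattacking ({p, q} : Finset (Fin m × Fin n)) := by
  intro x hx y hy hxy
  simp only [mem_insert, mem_singleton] at hx hy
  rcases hx with rfl | rfl <;> rcases hy with rfl | rfl
  exacts [absurd rfl hxy, ⟨h₁, h₂⟩, ⟨h₁.symm, h₂.symm⟩, absurd rfl hxy]

theorem Finset.pair_eq_pair_iff {α : Type*} [DecidableEq α] {x y z w : α} :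
    ({x, y} : Finset α) = {z, w} ↔ x = z ∧ y = w ∨ x = w ∧ y = z := by
  rw [← coe_inj, coe_pair, coe_pair, Set.pair_eq_pair_iff]

theorem Finset.nontrivial_pair {α : Type*} [DecidableEq α] {x y : α} (h : x ≠ y) :
    ({x, y} : Finset α).Nontrivial := by
  rw [← nontrivial_coe, coe_pair]
  exact Set.nontrivial_pair h

theorem wedge_eq_product {α β : Type*} [DecidableEq α] [DecidableEq β] (a d : α) (c : β) :
    ({(a, c), (d, c)} : Finset (α × β)) = ({a, d} : Finset α) ×ˢ ({c} : Finset β) := by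
  ext ⟨x, y⟩
  simp

theorem subset_of_product_subset_union {R R' : Finset (Fin m)} {C C' : Finset (Fin n)}
    {τ : Finset (Fin m × Fin n)} (hR : R.Nontrivial) (hC : C.Nonempty) (hτ : nonattacking τ)
    (hτC : ∀ p ∈ τ, p.2 ∉ C') (h : R ×ˢ C ⊆ R' ×ˢ C' ∪ τ) : R ⊆ R' ∧ C ⊆ C' := by
  have hCC' : C ⊆ C' := by
    intro y hy
    by_contra hy'
    have hmem : ∀ x ∈ R, (x, y) ∈ τ := fun x hx => by
      simpa [hy'] using h (mk_mem_product hx hy)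
    obtain ⟨a, ha, d, hd, had⟩ := hR
    exact had (congrArg Prod.fst (hτ.eq_of_snd_eq (hmem a ha) (hmem d hd) rfl))
  refine ⟨fun x hx => ?_, hCC'⟩
  obtain ⟨y, hy⟩ := hC
  rcases mem_union.1 (h (mk_mem_product hx hy)) with h' | h'
  · exact (mem_product.1 h').1
  · exact absurd (hCC' hy) (hτC _ h')

theorem eq_of_product_union_eq {R₁ R₂ : Finset (Fin m)} {C₁ C₂ : Finset (Fin n)}
    {τ₁ τ₂ : Finset (Fin m × Fin n)} (hR₁ : R₁.Nontrivial) (hR₂ : R₂.Nontrivial)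
    (hC₁ : C₁.Nonempty) (hC₂ : C₂.Nonempty) (hτ₁ : nonattacking τ₁) (hτ₂ : nonattacking τ₂)
    (hav₁ : ∀ p ∈ τ₁, p.1 ∉ R₁ ∧ p.2 ∉ C₁) (hav₂ : ∀ p ∈ τ₂, p.1 ∉ R₂ ∧ p.2 ∉ C₂)
    (h : R₁ ×ˢ C₁ ∪ τ₁ = R₂ ×ˢ C₂ ∪ τ₂) : R₁ = R₂ ∧ C₁ = C₂ ∧ τ₁ = τ₂ := by
  obtain ⟨hR, hC⟩ := subset_of_product_subset_union hR₁ hC₁ hτ₂ (fun p hp => (hav₂ p hp).2)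
    (h ▸ subset_union_left)
  obtain ⟨hR', hC'⟩ := subset_of_product_subset_union hR₂ hC₂ hτ₁ (fun p hp => (hav₁ p hp).2)
    (h.symm ▸ subset_union_left)
  obtain rfl := hR.antisymm hR'
  obtain rfl := hC.antisymm hC'
  have hdisj : ∀ τ, (∀ p ∈ τ, p.1 ∉ R₁ ∧ p.2 ∉ C₁) → Disjoint (R₁ ×ˢ C₁) τ := fun τ hav =>
    disjoint_right.2 fun p hp hpR => (hav p hp).1 (mem_product.1 hpR).1
  refine ⟨rfl, rfl, ?_⟩
  rw [← union_sdiff_cancel_left (hdisj τ₁ hav₁), h, union_sdiff_cancel_left (hdisj τ₂ hav₂)]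

section Decompositions

variable {B : Finset (Fin n × Fin n)} {j : ℤ}

-- `hitZ B j` is by definition `Nat.card {σ // ∃ a d b c τ, IsZDecomp B j a d b c τ σ}`,
-- and likewise for `hitS`, `hitWR` and `hitWC`.
def IsZDecomp (B : Finset (Fin n × Fin n)) (j : ℤ) (a d b c : Fin n)
    (τ σ : Finset (Fin n × Fin n)) : Prop :=
  a ≠ d ∧ b ≠ c ∧ σ = {(a, b), (a, c), (d, c)} ∪ τ ∧
    ({(a, b), (a, c), (d, c)} : Finset (Fin n × Fin n)) ⊆ B ∧
    nonattacking τ ∧ τ.card = n - 2 ∧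
    (∀ p ∈ τ, p.1 ≠ a ∧ p.1 ≠ d ∧ p.2 ≠ b ∧ p.2 ≠ c) ∧
    ((τ ∩ B).card : ℤ) = j

def IsSDecomp (B : Finset (Fin n × Fin n)) (j : ℤ) (a d b c : Fin n)
    (τ σ : Finset (Fin n × Fin n)) : Prop :=
  a ≠ d ∧ b ≠ c ∧ σ = (({a, d} : Finset (Fin n)) ×ˢ ({b, c} : Finset (Fin n))) ∪ τ ∧
    (({a, d} : Finset (Fin n)) ×ˢ ({b, c} : Finset (Fin n))) ⊆ B ∧
    nonattacking τ ∧ τ.card = n - 2 ∧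
    (∀ p ∈ τ, p.1 ≠ a ∧ p.1 ≠ d ∧ p.2 ≠ b ∧ p.2 ≠ c) ∧
    ((τ ∩ B).card : ℤ) = j

def IsWRDecomp (B : Finset (Fin n × Fin n)) (j : ℤ) (a d c : Fin n)
    (τ σ : Finset (Fin n × Fin n)) : Prop :=
  a ≠ d ∧ σ = {(a, c), (d, c)} ∪ τ ∧
    ({(a, c), (d, c)} : Finset (Fin n × Fin n)) ⊆ B ∧
    nonattacking τ ∧ τ.card = n - 2 ∧
    (∀ p ∈ τ, p.1 ≠ a ∧ p.1 ≠ d ∧ p.2 ≠ c) ∧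
    ((τ ∩ B).card : ℤ) = j

def IsWCDecomp (B : Finset (Fin n × Fin n)) (j : ℤ) (a b c : Fin n)
    (τ σ : Finset (Fin n × Fin n)) : Prop :=
  b ≠ c ∧ σ = {(a, b), (a, c)} ∪ τ ∧
    ({(a, b), (a, c)} : Finset (Fin n × Fin n)) ⊆ B ∧
    nonattacking τ ∧ τ.card = n - 2 ∧
    (∀ p ∈ τ, p.1 ≠ a ∧ p.2 ≠ b ∧ p.2 ≠ c) ∧
    ((τ ∩ B).card : ℤ) = j

variable {a d b c : Fin n} {τ σ : Finset (Fin n × Fin n)}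

theorem IsZDecomp.isWRDecomp (h : IsZDecomp B j a d b c τ σ) :
    IsWRDecomp B j a d c τ ({(a, c), (d, c)} ∪ τ) := by
  obtain ⟨had, -, -, hB, hna, hcard, hav, hj⟩ := h
  refine ⟨had, rfl, fun p hp => hB ?_, hna, hcard, fun p hp => ?_, hj⟩
  · simp only [mem_insert, mem_singleton] at hp ⊢
    tauto
  · obtain ⟨ha, hd, -, hc⟩ := hav p hp
    exact ⟨ha, hd, hc⟩

theorem IsZDecomp.isSDecomp (h : IsZDecomp B j a d b c τ σ) (hdb : (d, b) ∈ B) :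
    IsSDecomp B j a d b c τ (({a, d} : Finset (Fin n)) ×ˢ ({b, c} : Finset (Fin n)) ∪ τ) := by
  obtain ⟨had, hbc, -, hB, hna, hcard, hav, hj⟩ := h
  refine ⟨had, hbc, rfl, ?_, hna, hcard, hav, hj⟩
  rintro ⟨x, y⟩ hp
  simp only [mem_product, mem_insert, mem_singleton] at hp
  obtain ⟨rfl | rfl, rfl | rfl⟩ := hp
  exacts [hB (by simp), hB (by simp), hdb, hB (by simp)]

theorem IsZDecomp.eq_of_wedge_eq {a₁ d₁ b₁ c₁ a₂ d₂ b₂ c₂ : Fin n}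
    {τ₁ τ₂ σ₁ σ₂ : Finset (Fin n × Fin n)}
    (h₁ : IsZDecomp B j a₁ d₁ b₁ c₁ τ₁ σ₁) (h₂ : IsZDecomp B j a₂ d₂ b₂ c₂ τ₂ σ₂)
    (hd₁ : (d₁, b₁) ∈ B → ¬ d₁ < a₁) (hd₂ : (d₂, b₂) ∈ B → ¬ d₂ < a₂)
    (h : ({(a₁, c₁), (d₁, c₁)} : Finset (Fin n × Fin n)) ∪ τ₁ = {(a₂, c₂), (d₂, c₂)} ∪ τ₂) :
    σ₁ = σ₂ := by
  obtain ⟨had₁, hbc₁, rfl, hB₁, hna₁, hcard₁, hav₁, -⟩ := h₁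
  obtain ⟨had₂, hbc₂, rfl, hB₂, hna₂, -, hav₂, -⟩ := h₂
  rw [wedge_eq_product, wedge_eq_product] at h
  obtain ⟨hR, hC, rfl⟩ := eq_of_product_union_eq (nontrivial_pair had₁) (nontrivial_pair had₂)
    (singleton_nonempty _) (singleton_nonempty _) hna₁ hna₂
    (fun p hp => by obtain ⟨ha, hd, -, hc⟩ := hav₁ p hp; simp [ha, hd, hc])
    (fun p hp => by obtain ⟨ha, hd, -, hc⟩ := hav₂ p hp; simp [ha, hd, hc]) h
  obtain rfl := singleton_injective hC
  -- `b₁`, `b₂` and `c₁` are columns missed by `τ₁`, which occupies `n - 2` columns.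
  obtain rfl : b₁ = b₂ := by
    by_contra hb
    have := hna₁.card_add_card_le (C := {b₁, b₂, c₁}) fun p hp => by
      simp only [mem_insert, mem_singleton, not_or]
      exact ⟨(hav₁ p hp).2.2.1, (hav₂ p hp).2.2.1, (hav₁ p hp).2.2.2⟩
    rw [card_insert_of_notMem (by simp [hb, hbc₁]), card_pair hbc₂] at this
    omega
  rcases pair_eq_pair_iff.1 hR with ⟨rfl, rfl⟩ | ⟨rfl, rfl⟩
  · rfl
  · exact absurd (le_antisymm (not_lt.1 (hd₂ (hB₁ (by simp)))) (not_lt.1 (hd₁ (hB₂ (by simp)))))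
      had₂

theorem IsZDecomp.eq_of_block_eq {a₁ d₁ b₁ c₁ a₂ d₂ b₂ c₂ : Fin n}
    {τ₁ τ₂ σ₁ σ₂ : Finset (Fin n × Fin n)}
    (h₁ : IsZDecomp B j a₁ d₁ b₁ c₁ τ₁ σ₁) (h₂ : IsZDecomp B j a₂ d₂ b₂ c₂ τ₂ σ₂)
    (hd₁ : d₁ < a₁) (hd₂ : d₂ < a₂) (hbc : b₁ < c₁ ↔ b₂ < c₂)
    (h : ({a₁, d₁} : Finset (Fin n)) ×ˢ ({b₁, c₁} : Finset (Fin n)) ∪ τ₁ =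
      ({a₂, d₂} : Finset (Fin n)) ×ˢ ({b₂, c₂} : Finset (Fin n)) ∪ τ₂) :
    σ₁ = σ₂ := by
  obtain ⟨had₁, hbc₁, rfl, -, hna₁, -, hav₁, -⟩ := h₁
  obtain ⟨had₂, hbc₂, rfl, -, hna₂, -, hav₂, -⟩ := h₂
  obtain ⟨hR, hC, rfl⟩ := eq_of_product_union_eq (nontrivial_pair had₁) (nontrivial_pair had₂)
    (insert_nonempty _ _) (insert_nonempty _ _) hna₁ hna₂
    (fun p hp => by simpa [and_assoc] using hav₁ p hp)
    (fun p hp => by simpa [and_assoc] using hav₂ p hp) h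
  rcases pair_eq_pair_iff.1 hR with ⟨rfl, rfl⟩ | ⟨rfl, rfl⟩
  · rcases pair_eq_pair_iff.1 hC with ⟨rfl, rfl⟩ | ⟨rfl, rfl⟩
    · rfl
    · rcases hbc₂.lt_or_gt with hlt | hlt
      · exact absurd (hbc.2 hlt) hlt.asymm
      · exact absurd (hbc.1 hlt) hlt.asymm
  · exact absurd hd₁ hd₂.asymm

end Decompositions

theorem hitZ_le_hitWR_add_two_mul_hitS (B : Finset (Fin n × Fin n)) (j : ℤ) :
    hitZ B j ≤ hitWR B j + 2 * hitS B j := by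
  classical
  choose a d b c τ h using fun x : {σ // ∃ a d b c τ, IsZDecomp B j a d b c τ σ} => x.2
  let f : {σ // ∃ a d b c τ, IsZDecomp B j a d b c τ σ} →
      {σ // ∃ a d c τ, IsWRDecomp B j a d c τ σ} ⊕
        {σ // ∃ a d b c τ, IsSDecomp B j a d b c τ σ} × Bool := fun x =>
    if hx : (d x, b x) ∈ B ∧ d x < a x then
      .inr (⟨_, _, _, _, _, _, (h x).isSDecomp hx.1⟩, decide (b x < c x))
    else .inl ⟨_, _, _, _, _, (h x).isWRDecomp⟩
  have hf : f.Injective := by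
    intro x y hxy
    simp only [f] at hxy
    split_ifs at hxy with hx hy hy
    · simp only [Sum.inr.injEq, Prod.mk.injEq, Subtype.mk.injEq, decide_eq_decide] at hxy
      exact Subtype.ext ((h x).eq_of_block_eq (h y) hx.2 hy.2 hxy.2 hxy.1)
    · simp only [Sum.inl.injEq, Subtype.mk.injEq] at hxy
      exact Subtype.ext ((h x).eq_of_wedge_eq (h y) (not_and.1 hx) (not_and.1 hy) hxy)
  calc hitZ B j ≤ Nat.card (_ ⊕ _ × Bool) := Nat.card_le_card_of_injective f hf
    _ = hitWR B j + 2 * hitS B j := by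
      rw [Nat.card_sum, Nat.card_prod, Nat.card_eq_fintype_card (α := Bool), Fintype.card_bool,
        mul_comm]
      rfl

theorem card_le_card_of_image_swap {P : Finset (Fin m × Fin n) → Prop}
    {Q : Finset (Fin n × Fin m) → Prop} (h : ∀ σ, P σ → Q (σ.image Prod.swap)) :
    Nat.card {σ // P σ} ≤ Nat.card {σ // Q σ} :=
  Nat.card_le_card_of_injective (fun σ => ⟨_, h σ σ.2⟩) fun _ _ hστ =>
    Subtype.ext (image_injective Prod.swap_injective (congrArg Subtype.val hστ))

theorem card_image_swap_inter_image_swap (s t : Finset (Fin m × Fin n)) :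
    (s.image Prod.swap ∩ t.image Prod.swap).card = (s ∩ t).card := by
  rw [← image_inter _ _ Prod.swap_injective, card_image_of_injective _ Prod.swap_injective]

section Transpose

variable {B : Finset (Fin n × Fin n)} {j : ℤ} {a d b c : Fin n} {τ σ : Finset (Fin n × Fin n)}

theorem IsZDecomp.image_swap (h : IsZDecomp B j a d b c τ σ) :
    IsZDecomp (B.image Prod.swap) j c b d a (τ.image Prod.swap) (σ.image Prod.swap) := by
  obtain ⟨had, hbc, rfl, hB, hna, hcard, hav, hj⟩ := h
  have hZ : ({(a, b), (a, c), (d, c)} : Finset (Fin n × Fin n)).image Prod.swap =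
      {(c, d), (c, a), (b, a)} := by
    ext
    simp only [image_insert, image_singleton, Prod.swap_prod_mk, mem_insert, mem_singleton]
    tauto
  refine ⟨hbc.symm, had.symm, by rw [image_union, hZ], hZ ▸ image_subset_image hB,
    hna.image_swap, by rwa [card_image_of_injective _ Prod.swap_injective], fun p hp => ?_,
    by rwa [card_image_swap_inter_image_swap]⟩
  obtain ⟨q, hq, rfl⟩ := mem_image.1 hp
  obtain ⟨ha, hd, hb, hc⟩ := hav q hq
  exact ⟨hc, hb, hd, ha⟩

theorem IsWRDecomp.image_swap (h : IsWRDecomp B j a d c τ σ) :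
    IsWCDecomp (B.image Prod.swap) j c a d (τ.image Prod.swap) (σ.image Prod.swap) := by
  obtain ⟨had, rfl, hB, hna, hcard, hav, hj⟩ := h
  have hW : ({(a, c), (d, c)} : Finset (Fin n × Fin n)).image Prod.swap = {(c, a), (c, d)} := by
    simp only [image_insert, image_singleton, Prod.swap_prod_mk]
  refine ⟨had, by rw [image_union, hW], hW ▸ image_subset_image hB,
    hna.image_swap, by rwa [card_image_of_injective _ Prod.swap_injective], fun p hp => ?_,
    by rwa [card_image_swap_inter_image_swap]⟩
  obtain ⟨q, hq, rfl⟩ := mem_image.1 hp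
  obtain ⟨ha, hd, hc⟩ := hav q hq
  exact ⟨hc, ha, hd⟩

theorem IsSDecomp.image_swap (h : IsSDecomp B j a d b c τ σ) :
    IsSDecomp (B.image Prod.swap) j b c a d (τ.image Prod.swap) (σ.image Prod.swap) := by
  obtain ⟨had, hbc, rfl, hB, hna, hcard, hav, hj⟩ := h
  have hS := image_swap_product ({b, c} : Finset (Fin n)) ({a, d} : Finset (Fin n))
  refine ⟨hbc, had, by rw [image_union, hS], hS ▸ image_subset_image hB,
    hna.image_swap, by rwa [card_image_of_injective _ Prod.swap_injective], fun p hp => ?_,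
    by rwa [card_image_swap_inter_image_swap]⟩
  obtain ⟨q, hq, rfl⟩ := mem_image.1 hp
  obtain ⟨ha, hd, hb, hc⟩ := hav q hq
  exact ⟨hb, hc, ha, hd⟩

end Transpose

theorem hitZ_le_hitZ_image_swap (B : Finset (Fin n × Fin n)) (j : ℤ) :
    hitZ B j ≤ hitZ (B.image Prod.swap) j :=
  card_le_card_of_image_swap fun _ ⟨_, _, _, _, _, h⟩ => ⟨_, _, _, _, _, IsZDecomp.image_swap h⟩

theorem hitWR_le_hitWC_image_swap (B : Finset (Fin n × Fin n)) (j : ℤ) :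
    hitWR B j ≤ hitWC (B.image Prod.swap) j :=
  card_le_card_of_image_swap fun _ ⟨_, _, _, _, h⟩ => ⟨_, _, _, _, IsWRDecomp.image_swap h⟩

theorem hitS_le_hitS_image_swap (B : Finset (Fin n × Fin n)) (j : ℤ) :
    hitS B j ≤ hitS (B.image Prod.swap) j :=
  card_le_card_of_image_swap fun _ ⟨_, _, _, _, _, h⟩ => ⟨_, _, _, _, _, IsSDecomp.image_swap h⟩

theorem hitZ_le_hitWC_add_two_mul_hitS (B : Finset (Fin n × Fin n)) (j : ℤ) :
    hitZ B j ≤ hitWC B j + 2 * hitS B j := by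
  have hB : (B.image Prod.swap).image Prod.swap = B := by
    simp [image_image]
  have hWR := hitWR_le_hitWC_image_swap (B.image Prod.swap) j
  have hS := hitS_le_hitS_image_swap (B.image Prod.swap) j
  rw [hB] at hWR hS
  calc hitZ B j ≤ hitZ (B.image Prod.swap) j := hitZ_le_hitZ_image_swap B j
    _ ≤ hitWR (B.image Prod.swap) j + 2 * hitS (B.image Prod.swap) j :=
        hitZ_le_hitWR_add_two_mul_hitS _ _
    _ ≤ hitWC B j + 2 * hitS B j := by gcongr

def IsMarkedPlacement (B : Finset (Fin n × Fin n)) (k : ℕ)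
    (p : Finset (Fin n × Fin n) × Finset (Fin n × Fin n)) : Prop :=
  (nonattacking p.1 ∧ p.1.card = n ∧ (p.1 ∩ B).card = k) ∧ p.2 ∈ (p.1 ∩ B).powersetCard 2

theorem card_isMarkedPlacement (B : Finset (Fin n × Fin n)) (k : ℕ) :
    Nat.card {p // IsMarkedPlacement B k p} = hit B k * k.choose 2 := by
  classical
  let e : {p // IsMarkedPlacement B k p} ≃
      Σ σ : {σ : Finset (Fin n × Fin n) // nonattacking σ ∧ σ.card = n ∧ (σ ∩ B).card = k},
        (σ.1 ∩ B).powersetCard 2 :=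
    { toFun := fun p => ⟨⟨p.1.1, p.2.1⟩, ⟨p.1.2, p.2.2⟩⟩
      invFun := fun q => ⟨(q.1.1, q.2.1), ⟨q.1.2, q.2.2⟩⟩
      left_inv := fun _ => rfl
      right_inv := fun _ => rfl }
  rw [Nat.card_congr e, Nat.card_eq_fintype_card, Fintype.card_sigma]
  simp only [Fintype.card_coe, card_powersetCard]
  rw [sum_congr rfl fun σ _ => by rw [σ.2.2.2], sum_const, smul_eq_mul, card_univ,
    ← Nat.card_eq_fintype_card]
  rfl

section Diagonal

variable {B : Finset (Fin n × Fin n)} {j : ℤ} {a d b c : Fin n} {τ σ : Finset (Fin n × Fin n)}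

theorem IsSDecomp.swap (h : IsSDecomp B j a d b c τ σ) : IsSDecomp B j a d c b τ σ := by
  obtain ⟨had, hbc, hσ, hB, hna, hcard, hav, hj⟩ := h
  rw [pair_comm b c] at hσ hB
  exact ⟨had, hbc.symm, hσ, hB, hna, hcard, fun p hp => by
    obtain ⟨ha, hd, hb, hc⟩ := hav p hp; exact ⟨ha, hd, hc, hb⟩, hj⟩

theorem IsSDecomp.eq_product_image_union (h : IsSDecomp B j a d b c τ σ) :
    σ = ({(a, b), (d, c)} : Finset (Fin n × Fin n)).image Prod.fst ×ˢ
      ({(a, b), (d, c)} : Finset (Fin n × Fin n)).image Prod.snd ∪ (τ ∪ {(a, b), (d, c)}) := by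
  obtain ⟨-, -, rfl, -⟩ := h
  ext ⟨x, y⟩
  simp only [image_insert, image_singleton, mem_union, mem_product, mem_insert, mem_singleton,
    Prod.mk.injEq]
  tauto

theorem IsSDecomp.isMarkedPlacement {i : ℕ} (h : IsSDecomp B (i - 1) a d b c τ σ) :
    IsMarkedPlacement B (i + 1) (τ ∪ {(a, b), (d, c)}, {(a, b), (d, c)}) := by
  obtain ⟨had, hbc, -, hB, hna, hcard, hav, hj⟩ := h
  have hDB : ({(a, b), (d, c)} : Finset (Fin n × Fin n)) ⊆ B := fun p hp =>
    hB (by simp only [mem_insert, mem_singleton] at hp; rcases hp with rfl | rfl <;> simp)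
  have hcross : ∀ p ∈ τ, ∀ q ∈ ({(a, b), (d, c)} : Finset (Fin n × Fin n)),
      p.1 ≠ q.1 ∧ p.2 ≠ q.2 := by
    intro p hp q hq
    obtain ⟨ha, hd, hb, hc⟩ := hav p hp
    simp only [mem_insert, mem_singleton] at hq
    rcases hq with rfl | rfl
    exacts [⟨ha, hb⟩, ⟨hd, hc⟩]
  have hdisj : Disjoint τ {(a, b), (d, c)} :=
    disjoint_left.2 fun p hp hq => (hcross p hp p hq).1 rfl
  have hD : ({(a, b), (d, c)} : Finset (Fin n × Fin n)).card = 2 := card_pair (by simp [had])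
  have hn : 2 ≤ n := by simpa [card_pair had] using card_le_univ ({a, d} : Finset (Fin n))
  refine ⟨⟨hna.union (nonattacking_pair had hbc) hcross, ?_, ?_⟩,
    mem_powersetCard.2 ⟨subset_inter subset_union_right hDB, hD⟩⟩
  · rw [card_union_of_disjoint hdisj, hcard, hD]
    omega
  · rw [union_inter_distrib_right, inter_eq_left.2 hDB,
      card_union_of_disjoint (disjoint_of_subset_left inter_subset_left hdisj), hD]
    omega

end Diagonal

theorem two_mul_hitS_le (B : Finset (Fin n × Fin n)) (i : ℕ) :
    2 * hitS B (i - 1) ≤ (i + 1).choose 2 * hit B (i + 1) := by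
  classical
  choose a d b c τ h using
    fun x : {σ // ∃ a d b c τ, IsSDecomp B (i - 1) a d b c τ σ} => x.2
  let D : {σ // ∃ a d b c τ, IsSDecomp B (i - 1) a d b c τ σ} × Bool →
      Finset (Fin n × Fin n) := fun x =>
    cond x.2 {(a x.1, b x.1), (d x.1, c x.1)} {(a x.1, c x.1), (d x.1, b x.1)}
  have hD : ∀ x, ∃ b' c', IsSDecomp B (i - 1) (a x.1) (d x.1) b' c' (τ x.1) x.1.1 ∧
      D x = {(a x.1, b'), (d x.1, c')} := by
    rintro ⟨x, _ | _⟩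
    exacts [⟨_, _, (h x).swap, rfl⟩, ⟨_, _, h x, rfl⟩]
  let f : {σ // ∃ a d b c τ, IsSDecomp B (i - 1) a d b c τ σ} × Bool →
      {p // IsMarkedPlacement B (i + 1) p} := fun x =>
    ⟨(τ x.1 ∪ D x, D x), by
      obtain ⟨b', c', hx, hDx⟩ := hD x
      rw [hDx]
      exact hx.isMarkedPlacement⟩
  have hf : f.Injective := by
    rintro x y hxy
    simp only [f, Subtype.mk.injEq, Prod.mk.injEq] at hxy
    obtain ⟨b₁, c₁, hx, hDx⟩ := hD x
    obtain ⟨b₂, c₂, hy, hDy⟩ := hD y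
    have hσ : x.1 = y.1 := by
      apply Subtype.ext
      rw [hx.eq_product_image_union, hy.eq_product_image_union, ← hDx, ← hDy, hxy.1, hxy.2]
    obtain ⟨x, s⟩ := x
    obtain ⟨y, t⟩ := y
    obtain rfl : x = y := hσ
    refine Prod.ext rfl ?_
    obtain ⟨had, hbc, -⟩ := h x
    have hne : ({(a x, b x), (d x, c x)} : Finset (Fin n × Fin n)) ≠
        {(a x, c x), (d x, b x)} := by
      simp [pair_eq_pair_iff, had, hbc]
    cases s <;> cases t
    exacts [rfl, absurd hxy.2.symm hne, absurd hxy.2 hne, rfl]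
  calc 2 * hitS B (i - 1) = Nat.card (_ × Bool) := by
        rw [Nat.card_prod, Nat.card_eq_fintype_card (α := Bool), Fintype.card_bool, mul_comm]
        rfl
    _ ≤ _ := Nat.card_le_card_of_injective f hf
    _ = (i + 1).choose 2 * hit B (i + 1) := by rw [card_isMarkedPlacement, mul_comm]

/-- For a square board `B ⊆ [n]×[n]` and `i ≥ 0`:
`h_{WR,i−1} + h_{WC,i−1} − 2h_{Z,i−1} + 2h_{S,i−1} + (i(i+1)/2)·h_{i+1} ≥ 0`. -/
theorem square_chain_inequality_one {n : ℕ} (B : Finset (Fin n × Fin n)) (i : ℕ) :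
    (0 : ℚ) ≤ (hitWR B ((i : ℤ) - 1) : ℚ) + (hitWC B ((i : ℤ) - 1) : ℚ) -
      2 * (hitZ B ((i : ℤ) - 1) : ℚ) + 2 * (hitS B ((i : ℤ) - 1) : ℚ) +
      ((i : ℚ) * ((i : ℚ) + 1) / 2) * (hit B (i + 1) : ℚ) := by
  have hWR : (hitZ B (i - 1) : ℚ) ≤ hitWR B (i - 1) + 2 * hitS B (i - 1) := by
    exact_mod_cast hitZ_le_hitWR_add_two_mul_hitS B (i - 1)
  have hWC : (hitZ B (i - 1) : ℚ) ≤ hitWC B (i - 1) + 2 * hitS B (i - 1) := by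
    exact_mod_cast hitZ_le_hitWC_add_two_mul_hitS B (i - 1)
  have hS : 2 * (hitS B (i - 1) : ℚ) ≤ (i * (i + 1) / 2) * hit B (i + 1) := by
    have h : 2 * (hitS B (i - 1) : ℚ) ≤ ((i + 1).choose 2 : ℕ) * hit B (i + 1) := by
      exact_mod_cast two_mul_hitS_le B i
    rwa [Nat.cast_choose_two, Nat.cast_add_one, add_sub_cancel_right, mul_comm ((i : ℚ) + 1)] at h
  linarith
end

section
/- For every board B ⊆ [n]×[n] and every integer i ≥ 0: h_{Z,i}(B) − h_{S,i}(B) − h_{WR,i}(B) − h_{WC,i}(B) + ((i+1)(n−i−1)/2)·h_{i+1}(B) + ((i+1)(i+2)/4)·h_{i+2}(B) ≥ 0 (an inequality of rational numbers). -/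
open Finset

namespace SquareChain

variable {n : ℕ}

local notation "C" => (Fin n × Fin n)

lemma two_le_of_ne {a d : Fin n} (h : a ≠ d) : 2 ≤ n := by
  have : 1 < Fintype.card (Fin n) := Fintype.one_lt_card_iff.mpr ⟨a, d, h⟩
  simp only [Fintype.card_fin] at this; omega

lemma na_subset {s t : Finset C} (h : s ⊆ t) (ht : nonattacking t) : nonattacking s :=
  fun p hp q hq hne => ht p (h hp) q (h hq) hne

lemma na_union_two {τ : Finset C} (hτ : nonattacking τ) {x y : C}
    (h1 : x.1 ≠ y.1) (h2 : x.2 ≠ y.2)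
    (hx : ∀ p ∈ τ, p.1 ≠ x.1 ∧ p.2 ≠ x.2) (hy : ∀ p ∈ τ, p.1 ≠ y.1 ∧ p.2 ≠ y.2) :
    nonattacking (τ ∪ {x, y}) := by
  intro p hp q hq hne
  simp only [mem_union, mem_insert, mem_singleton] at hp hq
  rcases hp with hp | hp | hp <;> rcases hq with hq | hq | hq <;>
    (try subst hp) <;> (try subst hq)
  · exact hτ p hp q hq hne
  · exact hx p hp
  · exact hy p hp
  · exact ⟨((hx q hq).1).symm, ((hx q hq).2).symm⟩
  · exact absurd rfl hne
  · exact ⟨h1, h2⟩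
  · exact ⟨((hy q hq).1).symm, ((hy q hq).2).symm⟩
  · exact ⟨h1.symm, h2.symm⟩
  · exact absurd rfl hne

lemma card_union_two {τ : Finset C} {x y : C} (hx : x ∉ τ) (hy : y ∉ τ) (hxy : x ≠ y) :
    (τ ∪ {x, y}).card = τ.card + 2 := by
  rw [card_union_of_disjoint (by simp [disjoint_right, hx, hy]), card_pair hxy]

open scoped Classical in
noncomputable def Pset (B : Finset C) (k : ℕ) : Finset (Finset C) :=
  univ.filter fun ρ => nonattacking ρ ∧ ρ.card = n ∧ (ρ ∩ B).card = k

lemma mem_Pset {B : Finset C} {k : ℕ} {ρ : Finset C} :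
    ρ ∈ Pset B k ↔ nonattacking ρ ∧ ρ.card = n ∧ (ρ ∩ B).card = k := by
  simp [Pset]

open scoped Classical in
lemma hit_eq (B : Finset C) (k : ℕ) : hit B k = (Pset B k).card := by
  rw [hit, Nat.card_eq_fintype_card, Fintype.card_subtype]
  congr 1

open scoped Classical in
noncomputable def TA (B : Finset C) (i : ℕ) : Finset (Finset C × C × C) :=
  (Pset B (i+1)).biUnion fun ρ => {ρ} ×ˢ ((ρ ∩ B) ×ˢ (ρ \ B))

open scoped Classical in
noncomputable def TS (B : Finset C) (i : ℕ) : Finset (Finset C × C × C) :=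
  (Pset B (i+2)).biUnion fun ρ => {ρ} ×ˢ (ρ ∩ B).offDiag

lemma mem_TA {B : Finset C} {i : ℕ} {t : Finset C × C × C} :
    t ∈ TA B i ↔ t.1 ∈ Pset B (i+1) ∧ t.2.1 ∈ t.1 ∩ B ∧ t.2.2 ∈ t.1 \ B := by
  obtain ⟨ρ, P, Q⟩ := t
  simp only [TA, mem_biUnion, mem_product, mem_singleton]
  constructor
  · rintro ⟨ρ', hρ', rfl, h⟩; exact ⟨hρ', h⟩
  · rintro ⟨h1, h2⟩; exact ⟨ρ, h1, rfl, h2⟩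

lemma mem_TS {B : Finset C} {i : ℕ} {t : Finset C × C × C} :
    t ∈ TS B i ↔ t.1 ∈ Pset B (i+2) ∧ t.2.1 ∈ t.1 ∩ B ∧ t.2.2 ∈ t.1 ∩ B ∧ t.2.1 ≠ t.2.2 := by
  obtain ⟨ρ, P, Q⟩ := t
  simp only [TS, mem_biUnion, mem_product, mem_singleton, mem_offDiag]
  constructor
  · rintro ⟨ρ', hρ', rfl, h1, h2, h3⟩; exact ⟨hρ', h1, h2, h3⟩
  · rintro ⟨h0, h1, h2, h3⟩; exact ⟨ρ, h0, rfl, h1, h2, h3⟩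

lemma card_TA (B : Finset C) (i : ℕ) :
    (TA B i).card = hit B (i+1) * ((i+1) * (n - (i+1))) := by
  rw [TA, card_biUnion]
  · have h1 : ∀ ρ ∈ Pset B (i+1),
        ({ρ} ×ˢ ((ρ ∩ B) ×ˢ (ρ \ B))).card = (i+1) * (n - (i+1)) := by
      intro ρ hρ
      obtain ⟨hna, hcard, hib⟩ := mem_Pset.mp hρ
      rw [card_product, card_product, card_singleton, one_mul, hib]
      congr 1
      have : ρ \ B = ρ \ (ρ ∩ B) := by simp [Finset.sdiff_inter_self_left]
      rw [this, card_sdiff_of_subset inter_subset_left, hcard, hib]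
    rw [Finset.sum_congr rfl h1, Finset.sum_const, smul_eq_mul, hit_eq]
  · intro x hx y hy hxy
    simp only [disjoint_left]
    rintro t ht ht'
    rw [mem_product] at ht ht'
    exact hxy (by rw [← mem_singleton.mp ht.1, mem_singleton.mp ht'.1])

lemma card_TS (B : Finset C) (i : ℕ) :
    (TS B i).card = hit B (i+2) * ((i+1) * (i+2)) := by
  rw [TS, card_biUnion]
  · have h1 : ∀ ρ ∈ Pset B (i+2),
        ({ρ} ×ˢ (ρ ∩ B).offDiag).card = (i+1) * (i+2) := by
      intro ρ hρ
      obtain ⟨hna, hcard, hib⟩ := mem_Pset.mp hρ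
      rw [card_product, card_singleton, one_mul, Finset.offDiag_card, hib]
      have : (i+2) * (i+2) = (i+1)*(i+2) + (i+2) := by ring
      omega
    rw [Finset.sum_congr rfl h1, Finset.sum_const, smul_eq_mul, hit_eq]
  · intro x hx y hy hxy
    simp only [disjoint_left]
    rintro t ht ht'
    rw [mem_product] at ht ht'
    exact hxy (by rw [← mem_singleton.mp ht.1, mem_singleton.mp ht'.1])

end SquareChain

namespace SquareChain

variable {n : ℕ}

local notation "C" => (Fin n × Fin n)

lemma U_Z {a d b c a' d' b' c' : Fin n} {τ τ' : Finset C}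
    (had : a ≠ d) (hbc : b ≠ c)
    (hτ : nonattacking τ) (hav : ∀ p ∈ τ, p.1 ≠ a ∧ p.1 ≠ d ∧ p.2 ≠ b ∧ p.2 ≠ c)
    (had' : a' ≠ d') (hbc' : b' ≠ c')
    (hτ' : nonattacking τ') (hav' : ∀ p ∈ τ', p.1 ≠ a' ∧ p.1 ≠ d' ∧ p.2 ≠ b' ∧ p.2 ≠ c')
    (heq : ({(a,b),(a,c),(d,c)} : Finset C) ∪ τ = {(a',b'),(a',c'),(d',c')} ∪ τ') :
    a' = a ∧ b' = b ∧ c' = c ∧ d' = d ∧ τ' = τ := by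
  have hmem : ∀ x : C, ((x = (a,b) ∨ x = (a,c) ∨ x = (d,c)) ∨ x ∈ τ) ↔
      ((x = (a',b') ∨ x = (a',c') ∨ x = (d',c')) ∨ x ∈ τ') := by
    intro x
    have h := Finset.ext_iff.mp heq x
    simp only [mem_union, mem_insert, mem_singleton] at h
    tauto
  have hne_ab'ac' : ((a',b') : C) ≠ (a',c') := fun hh => hbc' (congrArg Prod.snd hh)
  have h1 : ((a',b') : C) = (a,b) ∨ ((a',b') : C) = (a,c) ∨ ((a',b') : C) = (d,c) := by
    have hx := (hmem (a',b')).mpr (Or.inl (Or.inl rfl))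
    rcases hx with h | h
    · exact h
    · exfalso
      have hy := (hmem (a',c')).mpr (Or.inl (Or.inr (Or.inl rfl)))
      obtain ⟨ha1, ha2, _, _⟩ := hav _ h
      rcases hy with (hy | hy | hy) | hy
      · rw [Prod.mk.injEq] at hy; exact ha1 hy.1
      · rw [Prod.mk.injEq] at hy; exact ha1 hy.1
      · rw [Prod.mk.injEq] at hy; exact ha2 hy.1
      · exact (hτ _ h _ hy hne_ab'ac').1 rfl
  have ha' : a' = a ∨ a' = d := by
    rcases h1 with h | h | h <;> rw [Prod.mk.injEq] at h
    · exact Or.inl h.1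
    · exact Or.inl h.1
    · exact Or.inr h.1
  have h2 : ((a',c') : C) = (a,b) ∨ ((a',c') : C) = (a,c) ∨ ((a',c') : C) = (d,c) := by
    have hy := (hmem (a',c')).mpr (Or.inl (Or.inr (Or.inl rfl)))
    rcases hy with h | h
    · exact h
    · exfalso
      obtain ⟨hc1, hc2, _, _⟩ := hav _ h
      rcases ha' with h' | h'
      · exact hc1 h'
      · exact hc2 h'
  have habc : a' = a ∧ b' = b ∧ c' = c := by
    rcases h1 with h | h | h <;> rw [Prod.mk.injEq] at h <;>
      rcases h2 with h2 | h2 | h2 <;> rw [Prod.mk.injEq] at h2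
    · exact absurd (h.2.trans h2.2.symm) hbc'
    · exact ⟨h.1, h.2, h2.2⟩
    · exact absurd (h.1.symm.trans h2.1) had
    · -- h : a'=a ∧ b'=c ; h2 : a'=a ∧ c'=b
      exfalso
      have hz := (hmem (d',c')).mpr (Or.inl (Or.inr (Or.inr rfl)))
      rcases hz with (hz | hz | hz) | hz
      · rw [Prod.mk.injEq] at hz; exact had' (h.1.trans hz.1.symm)
      · rw [Prod.mk.injEq] at hz; exact hbc (h2.2.symm.trans hz.2)
      · rw [Prod.mk.injEq] at hz; exact hbc (h2.2.symm.trans hz.2)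
      · exact (hav _ hz).2.2.1 h2.2
    · exact absurd (h.2.trans h2.2.symm) hbc'
    · exact absurd (h.1.symm.trans h2.1) had
    · exact absurd (h2.1.symm.trans h.1) had
    · exact absurd (h2.1.symm.trans h.1) had
    · exact absurd (h.2.trans h2.2.symm) hbc'
  obtain ⟨ha, hb, hc⟩ := habc
  have hd : d' = d := by
    have hz := (hmem (d',c')).mpr (Or.inl (Or.inr (Or.inr rfl)))
    rcases hz with (hz | hz | hz) | hz
    · rw [Prod.mk.injEq] at hz; exact absurd (hc.symm.trans hz.2) (Ne.symm hbc)
    · rw [Prod.mk.injEq] at hz; exact absurd (ha.trans hz.1.symm) had'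
    · rw [Prod.mk.injEq] at hz; exact hz.1
    · exact absurd hc (hav _ hz).2.2.2
  refine ⟨ha, hb, hc, hd, ?_⟩
  have hav'' : ∀ p ∈ τ', p.1 ≠ a ∧ p.1 ≠ d ∧ p.2 ≠ b ∧ p.2 ≠ c := by
    intro p hp
    obtain ⟨m1, m2, m3, m4⟩ := hav' _ hp
    exact ⟨ha ▸ m1, hd ▸ m2, hb ▸ m3, hc ▸ m4⟩
  ext x
  constructor
  · intro hx
    have hm := (hmem x).mpr (Or.inr hx)
    obtain ⟨hx1, hx2, hx3, hx4⟩ := hav'' _ hx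
    rcases hm with (h | h | h) | h
    · exact absurd (congrArg Prod.fst h) hx1
    · exact absurd (congrArg Prod.fst h) hx1
    · exact absurd (congrArg Prod.fst h) hx2
    · exact h
  · intro hx
    have hm := (hmem x).mp (Or.inr hx)
    obtain ⟨hx1, hx2, hx3, hx4⟩ := hav _ hx
    rcases hm with (h | h | h) | h
    · rw [ha, hb] at h; exact absurd (congrArg Prod.fst h) hx1
    · rw [ha, hc] at h; exact absurd (congrArg Prod.fst h) hx1
    · rw [hd, hc] at h; exact absurd (congrArg Prod.fst h) hx2
    · exact h

lemma U_WR {a d c a' d' c' : Fin n} {τ τ' : Finset C}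
    (had : a ≠ d)
    (hτ : nonattacking τ) (hav : ∀ p ∈ τ, p.1 ≠ a ∧ p.1 ≠ d ∧ p.2 ≠ c)
    (had' : a' ≠ d')
    (hτ' : nonattacking τ') (hav' : ∀ p ∈ τ', p.1 ≠ a' ∧ p.1 ≠ d' ∧ p.2 ≠ c')
    (heq : ({(a,c),(d,c)} : Finset C) ∪ τ = {(a',c'),(d',c')} ∪ τ') :
    c' = c ∧ ((a' = a ∧ d' = d) ∨ (a' = d ∧ d' = a)) ∧ τ' = τ := by
  have hmem : ∀ x : C, ((x = (a,c) ∨ x = (d,c)) ∨ x ∈ τ) ↔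
      ((x = (a',c') ∨ x = (d',c')) ∨ x ∈ τ') := by
    intro x
    have h := Finset.ext_iff.mp heq x
    simp only [mem_union, mem_insert, mem_singleton] at h
    tauto
  have hne' : ((a',c') : C) ≠ (d',c') := fun hh => had' (congrArg Prod.fst hh)
  have h1 : ((a',c') : C) = (a,c) ∨ ((a',c') : C) = (d,c) := by
    have hx := (hmem (a',c')).mpr (Or.inl (Or.inl rfl))
    rcases hx with h | h
    · exact h
    · exfalso
      have hy := (hmem (d',c')).mpr (Or.inl (Or.inr rfl))
      have hcne := (hav _ h).2.2
      rcases hy with (hy | hy) | hy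
      · rw [Prod.mk.injEq] at hy; exact hcne hy.2
      · rw [Prod.mk.injEq] at hy; exact hcne hy.2
      · exact (hτ _ h _ hy hne').2 rfl
  have hc : c' = c := by
    rcases h1 with h | h <;> rw [Prod.mk.injEq] at h
    · exact h.2
    · exact h.2
  have h2 : ((d',c') : C) = (a,c) ∨ ((d',c') : C) = (d,c) := by
    have hy := (hmem (d',c')).mpr (Or.inl (Or.inr rfl))
    rcases hy with h | h
    · exact h
    · exact absurd hc (hav _ h).2.2
  have ha1 : a' = a ∨ a' = d := by
    rcases h1 with h | h <;> rw [Prod.mk.injEq] at h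
    · exact Or.inl h.1
    · exact Or.inr h.1
  have hd1 : d' = a ∨ d' = d := by
    rcases h2 with h | h <;> rw [Prod.mk.injEq] at h
    · exact Or.inl h.1
    · exact Or.inr h.1
  have hsplit : (a' = a ∧ d' = d) ∨ (a' = d ∧ d' = a) := by
    rcases ha1 with h | h <;> rcases hd1 with h' | h'
    · exact absurd (h.trans h'.symm) had'
    · exact Or.inl ⟨h, h'⟩
    · exact Or.inr ⟨h, h'⟩
    · exact absurd (h.trans h'.symm) had'
  refine ⟨hc, hsplit, ?_⟩
  have hrows : ∀ p ∈ τ', p.1 ≠ a ∧ p.1 ≠ d ∧ p.2 ≠ c := by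
    intro p hp
    obtain ⟨k1, k2, k3⟩ := hav' _ hp
    rcases hsplit with ⟨h1', h2'⟩ | ⟨h1', h2'⟩
    · exact ⟨h1' ▸ k1, h2' ▸ k2, hc ▸ k3⟩
    · exact ⟨h2' ▸ k2, h1' ▸ k1, hc ▸ k3⟩
  ext x
  constructor
  · intro hx
    have hm := (hmem x).mpr (Or.inr hx)
    obtain ⟨hx1, hx2, hx3⟩ := hrows _ hx
    rcases hm with (h | h) | h
    · exact absurd (congrArg Prod.fst h) hx1
    · exact absurd (congrArg Prod.fst h) hx2
    · exact h
  · intro hx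
    have hm := (hmem x).mp (Or.inr hx)
    obtain ⟨hx1, hx2, hx3⟩ := hav _ hx
    rcases hm with (h | h) | h
    · have := congrArg Prod.snd h
      simp only at this
      rw [hc] at this
      exact absurd this hx3
    · have := congrArg Prod.snd h
      simp only at this
      rw [hc] at this
      exact absurd this hx3
    · exact h

lemma U_WC {a b c a' b' c' : Fin n} {τ τ' : Finset C}
    (hbc : b ≠ c)
    (hτ : nonattacking τ) (hav : ∀ p ∈ τ, p.1 ≠ a ∧ p.2 ≠ b ∧ p.2 ≠ c)
    (hbc' : b' ≠ c')
    (hτ' : nonattacking τ') (hav' : ∀ p ∈ τ', p.1 ≠ a' ∧ p.2 ≠ b' ∧ p.2 ≠ c')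
    (heq : ({(a,b),(a,c)} : Finset C) ∪ τ = {(a',b'),(a',c')} ∪ τ') :
    a' = a ∧ ((b' = b ∧ c' = c) ∨ (b' = c ∧ c' = b)) ∧ τ' = τ := by
  have hmem : ∀ x : C, ((x = (a,b) ∨ x = (a,c)) ∨ x ∈ τ) ↔
      ((x = (a',b') ∨ x = (a',c')) ∨ x ∈ τ') := by
    intro x
    have h := Finset.ext_iff.mp heq x
    simp only [mem_union, mem_insert, mem_singleton] at h
    tauto
  have hne' : ((a',b') : C) ≠ (a',c') := fun hh => hbc' (congrArg Prod.snd hh)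
  have h1 : ((a',b') : C) = (a,b) ∨ ((a',b') : C) = (a,c) := by
    have hx := (hmem (a',b')).mpr (Or.inl (Or.inl rfl))
    rcases hx with h | h
    · exact h
    · exfalso
      have hy := (hmem (a',c')).mpr (Or.inl (Or.inr rfl))
      have hane := (hav _ h).1
      rcases hy with (hy | hy) | hy
      · rw [Prod.mk.injEq] at hy; exact hane hy.1
      · rw [Prod.mk.injEq] at hy; exact hane hy.1
      · exact (hτ _ h _ hy hne').1 rfl
  have ha : a' = a := by
    rcases h1 with h | h <;> rw [Prod.mk.injEq] at h
    · exact h.1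
    · exact h.1
  have h2 : ((a',c') : C) = (a,b) ∨ ((a',c') : C) = (a,c) := by
    have hy := (hmem (a',c')).mpr (Or.inl (Or.inr rfl))
    rcases hy with h | h
    · exact h
    · exact absurd ha (hav _ h).1
  have hb1 : b' = b ∨ b' = c := by
    rcases h1 with h | h <;> rw [Prod.mk.injEq] at h
    · exact Or.inl h.2
    · exact Or.inr h.2
  have hc1 : c' = b ∨ c' = c := by
    rcases h2 with h | h <;> rw [Prod.mk.injEq] at h
    · exact Or.inl h.2
    · exact Or.inr h.2
  have hsplit : (b' = b ∧ c' = c) ∨ (b' = c ∧ c' = b) := by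
    rcases hb1 with h | h <;> rcases hc1 with h' | h'
    · exact absurd (h.trans h'.symm) hbc'
    · exact Or.inl ⟨h, h'⟩
    · exact Or.inr ⟨h, h'⟩
    · exact absurd (h.trans h'.symm) hbc'
  refine ⟨ha, hsplit, ?_⟩
  have hcols : ∀ p ∈ τ', p.1 ≠ a ∧ p.2 ≠ b ∧ p.2 ≠ c := by
    intro p hp
    obtain ⟨k1, k2, k3⟩ := hav' _ hp
    rcases hsplit with ⟨h1', h2'⟩ | ⟨h1', h2'⟩
    · exact ⟨ha ▸ k1, h1' ▸ k2, h2' ▸ k3⟩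
    · exact ⟨ha ▸ k1, h2' ▸ k3, h1' ▸ k2⟩
  ext x
  constructor
  · intro hx
    have hm := (hmem x).mpr (Or.inr hx)
    obtain ⟨hx1, hx2, hx3⟩ := hcols _ hx
    rcases hm with (h | h) | h
    · exact absurd (congrArg Prod.snd h) hx2
    · exact absurd (congrArg Prod.snd h) hx3
    · exact h
  · intro hx
    have hm := (hmem x).mp (Or.inr hx)
    obtain ⟨hx1, hx2, hx3⟩ := hav _ hx
    rcases hm with (h | h) | h
    · have := congrArg Prod.fst h
      simp only at this
      rw [ha] at this
      exact absurd this hx1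
    · have := congrArg Prod.fst h
      simp only at this
      rw [ha] at this
      exact absurd this hx1
    · exact h

lemma U_S {a d b c a' d' b' c' : Fin n} {τ τ' : Finset C}
    (had : a ≠ d) (hbc : b ≠ c)
    (hτ : nonattacking τ) (hav : ∀ p ∈ τ, p.1 ≠ a ∧ p.1 ≠ d ∧ p.2 ≠ b ∧ p.2 ≠ c)
    (had' : a' ≠ d') (hbc' : b' ≠ c')
    (hτ' : nonattacking τ') (hav' : ∀ p ∈ τ', p.1 ≠ a' ∧ p.1 ≠ d' ∧ p.2 ≠ b' ∧ p.2 ≠ c')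
    (heq : ({(a,b),(a,c),(d,b),(d,c)} : Finset C) ∪ τ
         = {(a',b'),(a',c'),(d',b'),(d',c')} ∪ τ') :
    ((a' = a ∧ d' = d) ∨ (a' = d ∧ d' = a)) ∧ ((b' = b ∧ c' = c) ∨ (b' = c ∧ c' = b)) ∧
      τ' = τ := by
  have hmem : ∀ x : C, ((x = (a,b) ∨ x = (a,c) ∨ x = (d,b) ∨ x = (d,c)) ∨ x ∈ τ) ↔
      ((x = (a',b') ∨ x = (a',c') ∨ x = (d',b') ∨ x = (d',c')) ∨ x ∈ τ') := by
    intro x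
    have h := Finset.ext_iff.mp heq x
    simp only [mem_union, mem_insert, mem_singleton] at h
    tauto
  have key : ∀ r s s2 : Fin n, s ≠ s2 →
      (((r,s) : C) = (a',b') ∨ ((r,s) : C) = (a',c') ∨ ((r,s) : C) = (d',b') ∨ ((r,s) : C) = (d',c')) →
      (((r,s2) : C) = (a',b') ∨ ((r,s2) : C) = (a',c') ∨ ((r,s2) : C) = (d',b') ∨ ((r,s2) : C) = (d',c')) →
      (r = a ∨ r = d) ∧ (s = b ∨ s = c) := by
    intro r s s2 hss hrs hrs2
    have hx := (hmem (r,s)).mpr (Or.inl hrs)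
    have hy := (hmem (r,s2)).mpr (Or.inl hrs2)
    rcases hx with h | h
    · rcases h with h | h | h | h <;> rw [Prod.mk.injEq] at h
      · exact ⟨Or.inl h.1, Or.inl h.2⟩
      · exact ⟨Or.inl h.1, Or.inr h.2⟩
      · exact ⟨Or.inr h.1, Or.inl h.2⟩
      · exact ⟨Or.inr h.1, Or.inr h.2⟩
    · exfalso
      obtain ⟨k1, k2, _, _⟩ := hav _ h
      rcases hy with h' | h'
      · rcases h' with h' | h' | h' | h' <;> rw [Prod.mk.injEq] at h'
        · exact k1 h'.1
        · exact k1 h'.1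
        · exact k2 h'.1
        · exact k2 h'.1
      · exact (hτ _ h _ h' (fun hh => hss (congrArg Prod.snd hh))).1 rfl
  have k1 := key a' b' c' hbc' (Or.inl rfl) (Or.inr (Or.inl rfl))
  have k2 := key d' b' c' hbc' (Or.inr (Or.inr (Or.inl rfl))) (Or.inr (Or.inr (Or.inr rfl)))
  have hsplit1 : (a' = a ∧ d' = d) ∨ (a' = d ∧ d' = a) := by
    rcases k1.1 with h | h <;> rcases k2.1 with h' | h'
    · exact absurd (h.trans h'.symm) had'
    · exact Or.inl ⟨h, h'⟩
    · exact Or.inr ⟨h, h'⟩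
    · exact absurd (h.trans h'.symm) had'
  have key2 : ∀ s r r2 : Fin n, r ≠ r2 →
      (((r,s) : C) = (a',b') ∨ ((r,s) : C) = (a',c') ∨ ((r,s) : C) = (d',b') ∨ ((r,s) : C) = (d',c')) →
      (((r2,s) : C) = (a',b') ∨ ((r2,s) : C) = (a',c') ∨ ((r2,s) : C) = (d',b') ∨ ((r2,s) : C) = (d',c')) →
      (s = b ∨ s = c) := by
    intro s r r2 hrr hrs hrs2
    have hx := (hmem (r,s)).mpr (Or.inl hrs)
    have hy := (hmem (r2,s)).mpr (Or.inl hrs2)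
    rcases hx with h | h
    · rcases h with h | h | h | h <;> rw [Prod.mk.injEq] at h
      · exact Or.inl h.2
      · exact Or.inr h.2
      · exact Or.inl h.2
      · exact Or.inr h.2
    · exfalso
      obtain ⟨_, _, k3, k4⟩ := hav _ h
      rcases hy with h' | h'
      · rcases h' with h' | h' | h' | h' <;> rw [Prod.mk.injEq] at h'
        · exact k3 h'.2
        · exact k4 h'.2
        · exact k3 h'.2
        · exact k4 h'.2
      · exact (hτ _ h _ h' (fun hh => hrr (congrArg Prod.fst hh))).2 rfl
  have kb := key2 b' a' d' had' (Or.inl rfl) (Or.inr (Or.inr (Or.inl rfl)))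
  have kc := key2 c' a' d' had' (Or.inr (Or.inl rfl)) (Or.inr (Or.inr (Or.inr rfl)))
  have hsplit2 : (b' = b ∧ c' = c) ∨ (b' = c ∧ c' = b) := by
    rcases kb with h | h <;> rcases kc with h' | h'
    · exact absurd (h.trans h'.symm) hbc'
    · exact Or.inl ⟨h, h'⟩
    · exact Or.inr ⟨h, h'⟩
    · exact absurd (h.trans h'.symm) hbc'
  refine ⟨hsplit1, hsplit2, ?_⟩
  have hav'' : ∀ p ∈ τ', p.1 ≠ a ∧ p.1 ≠ d ∧ p.2 ≠ b ∧ p.2 ≠ c := by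
    intro p hp
    obtain ⟨m1, m2, m3, m4⟩ := hav' _ hp
    refine ⟨?_, ?_, ?_, ?_⟩
    · rcases hsplit1 with ⟨h1, h2⟩ | ⟨h1, h2⟩
      · exact h1 ▸ m1
      · exact h2 ▸ m2
    · rcases hsplit1 with ⟨h1, h2⟩ | ⟨h1, h2⟩
      · exact h2 ▸ m2
      · exact h1 ▸ m1
    · rcases hsplit2 with ⟨h1, h2⟩ | ⟨h1, h2⟩
      · exact h1 ▸ m3
      · exact h2 ▸ m4
    · rcases hsplit2 with ⟨h1, h2⟩ | ⟨h1, h2⟩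
      · exact h2 ▸ m4
      · exact h1 ▸ m3
  ext x
  constructor
  · intro hx
    have hm := (hmem x).mpr (Or.inr hx)
    obtain ⟨hx1, hx2, hx3, hx4⟩ := hav'' _ hx
    rcases hm with (h | h | h | h) | h
    · exact absurd (congrArg Prod.fst h) hx1
    · exact absurd (congrArg Prod.fst h) hx1
    · exact absurd (congrArg Prod.fst h) hx2
    · exact absurd (congrArg Prod.fst h) hx2
    · exact h
  · intro hx
    have hm := (hmem x).mp (Or.inr hx)
    obtain ⟨hx1, hx2, hx3, hx4⟩ := hav _ hx
    rcases hm with (h | h | h | h) | h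
    · have := congrArg Prod.fst h
      simp only at this
      rcases hsplit1 with ⟨e1, _⟩ | ⟨e1, _⟩ <;> rw [e1] at this
      · exact absurd this hx1
      · exact absurd this hx2
    · have := congrArg Prod.fst h
      simp only at this
      rcases hsplit1 with ⟨e1, _⟩ | ⟨e1, _⟩ <;> rw [e1] at this
      · exact absurd this hx1
      · exact absurd this hx2
    · have := congrArg Prod.fst h
      simp only at this
      rcases hsplit1 with ⟨_, e2⟩ | ⟨_, e2⟩ <;> rw [e2] at this
      · exact absurd this hx2
      · exact absurd this hx1
    · have := congrArg Prod.fst h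
      simp only at this
      rcases hsplit1 with ⟨_, e2⟩ | ⟨_, e2⟩ <;> rw [e2] at this
      · exact absurd this hx2
      · exact absurd this hx1
    · exact h

end SquareChain

namespace SquareChain

variable {n : ℕ}

local notation "C" => (Fin n × Fin n)

open scoped Classical in
noncomputable def ARs (B : Finset C) (i : ℕ) : Finset (Finset C × C × C) :=
  (TA B i).filter fun t => (t.2.2.1, t.2.1.2) ∈ B

open scoped Classical in
noncomputable def ACs (B : Finset C) (i : ℕ) : Finset (Finset C × C × C) :=
  (TA B i).filter fun t => (t.2.1.1, t.2.2.2) ∈ B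

open scoped Classical in
noncomputable def ABad (B : Finset C) (i : ℕ) : Finset (Finset C × C × C) :=
  (TA B i).filter fun t => (t.2.2.1, t.2.1.2) ∈ B ∧ (t.2.1.1, t.2.2.2) ∈ B

open scoped Classical in
noncomputable def Z2s (B : Finset C) (i : ℕ) : Finset (Finset C × C × C) :=
  (TS B i).filter fun t => (t.2.2.1, t.2.1.2) ∈ B

open scoped Classical in
noncomputable def Z2s' (B : Finset C) (i : ℕ) : Finset (Finset C × C × C) :=
  (TS B i).filter fun t => (t.2.1.1, t.2.2.2) ∈ B

open scoped Classical in
noncomputable def Sbs (B : Finset C) (i : ℕ) : Finset (Finset C × C × C) :=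
  (TS B i).filter fun t => (t.2.2.1, t.2.1.2) ∈ B ∧ (t.2.1.1, t.2.2.2) ∈ B

lemma card_Z2s' (B : Finset C) (i : ℕ) : (Z2s' B i).card = (Z2s B i).card := by
  refine Finset.card_nbij' (fun t => (t.1, t.2.2, t.2.1)) (fun t => (t.1, t.2.2, t.2.1)) ?_ ?_ ?_ ?_
  · rintro ⟨ρ, P, Q⟩ ht
    simp only [Z2s', mem_coe, mem_filter, mem_TS] at ht
    simp only [Z2s, mem_coe, mem_filter, mem_TS]
    exact ⟨⟨ht.1.1, ht.1.2.2.1, ht.1.2.1, ht.1.2.2.2.symm⟩, ht.2⟩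
  · rintro ⟨ρ, P, Q⟩ ht
    simp only [Z2s, mem_coe, mem_filter, mem_TS] at ht
    simp only [Z2s', mem_coe, mem_filter, mem_TS]
    exact ⟨⟨ht.1.1, ht.1.2.2.1, ht.1.2.1, ht.1.2.2.2.symm⟩, ht.2⟩
  · rintro ⟨ρ, P, Q⟩ _; rfl
  · rintro ⟨ρ, P, Q⟩ _; rfl

lemma notmem_of_avoid {τ : Finset C} {x : C} (hx : ∀ p ∈ τ, p.1 ≠ x.1 ∧ p.2 ≠ x.2) :
    x ∉ τ := fun h => (hx x h).1 rfl

lemma build_Pset2 {B : Finset C} {i : ℕ} {τ : Finset C} {x y : C}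
    (hτ : nonattacking τ) (hτcard : τ.card = n - 2) (hn : 2 ≤ n) (hτi : (τ ∩ B).card = i)
    (hxy1 : x.1 ≠ y.1) (hxy2 : x.2 ≠ y.2)
    (hx : ∀ p ∈ τ, p.1 ≠ x.1 ∧ p.2 ≠ x.2) (hy : ∀ p ∈ τ, p.1 ≠ y.1 ∧ p.2 ≠ y.2)
    (hxB : x ∈ B) (hyB : y ∈ B) :
    τ ∪ {x, y} ∈ Pset B (i+2) := by
  have hxτ : x ∉ τ := notmem_of_avoid hx
  have hyτ : y ∉ τ := notmem_of_avoid hy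
  have hxyne : x ≠ y := fun h => hxy1 (congrArg Prod.fst h)
  refine mem_Pset.mpr ⟨na_union_two hτ hxy1 hxy2 hx hy, ?_, ?_⟩
  · rw [card_union_two hxτ hyτ hxyne, hτcard]; omega
  · have hint : (τ ∪ {x, y}) ∩ B = (τ ∩ B) ∪ {x, y} := by
      ext z
      simp only [mem_inter, mem_union, mem_insert, mem_singleton]
      constructor
      · rintro ⟨hz | rfl | rfl, hzB⟩
        · exact Or.inl ⟨hz, hzB⟩
        · exact Or.inr (Or.inl rfl)
        · exact Or.inr (Or.inr rfl)
      · rintro (⟨hz, hzB⟩ | rfl | rfl)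
        · exact ⟨Or.inl hz, hzB⟩
        · exact ⟨Or.inr (Or.inl rfl), hxB⟩
        · exact ⟨Or.inr (Or.inr rfl), hyB⟩
    rw [hint, card_union_two (fun h => hxτ (mem_inter.mp h).1)
      (fun h => hyτ (mem_inter.mp h).1) hxyne, hτi]

lemma build_Pset1 {B : Finset C} {i : ℕ} {τ : Finset C} {x y : C}
    (hτ : nonattacking τ) (hτcard : τ.card = n - 2) (hn : 2 ≤ n) (hτi : (τ ∩ B).card = i)
    (hxy1 : x.1 ≠ y.1) (hxy2 : x.2 ≠ y.2)
    (hx : ∀ p ∈ τ, p.1 ≠ x.1 ∧ p.2 ≠ x.2) (hy : ∀ p ∈ τ, p.1 ≠ y.1 ∧ p.2 ≠ y.2)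
    (hxB : x ∈ B) (hyB : y ∉ B) :
    τ ∪ {x, y} ∈ Pset B (i+1) := by
  have hxτ : x ∉ τ := notmem_of_avoid hx
  have hyτ : y ∉ τ := notmem_of_avoid hy
  have hxyne : x ≠ y := fun h => hxy1 (congrArg Prod.fst h)
  refine mem_Pset.mpr ⟨na_union_two hτ hxy1 hxy2 hx hy, ?_, ?_⟩
  · rw [card_union_two hxτ hyτ hxyne, hτcard]; omega
  · have hint : (τ ∪ {x, y}) ∩ B = insert x (τ ∩ B) := by
      ext z
      simp only [mem_inter, mem_union, mem_insert, mem_singleton]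
      constructor
      · rintro ⟨hz | rfl | rfl, hzB⟩
        · exact Or.inr ⟨hz, hzB⟩
        · exact Or.inl rfl
        · exact absurd hzB hyB
      · rintro (rfl | ⟨hz, hzB⟩)
        · exact ⟨Or.inr (Or.inl rfl), hxB⟩
        · exact ⟨Or.inl hz, hzB⟩
    rw [hint, card_insert_of_notMem (fun h => hxτ (mem_inter.mp h).1), hτi]

/-- Decomposition data extracted from an element of `Z2s`. -/
lemma Z_decomp {B : Finset C} {i : ℕ} {ρ : Finset C} {P Q : C}
    (ht : (ρ, P, Q) ∈ Z2s B i) :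
    P ∈ ρ ∧ Q ∈ ρ ∧ P ≠ Q ∧
    Q.1 ≠ P.1 ∧ Q.2 ≠ P.2 ∧
    ρ ∪ {(Q.1, P.2)} = ({(Q.1, Q.2), (Q.1, P.2), (P.1, P.2)} : Finset C) ∪ (ρ \ {P, Q}) ∧
    ({(Q.1, Q.2), (Q.1, P.2), (P.1, P.2)} : Finset C) ⊆ B ∧
    nonattacking (ρ \ {P, Q}) ∧ (ρ \ {P, Q}).card = n - 2 ∧
    (∀ p ∈ ρ \ {P, Q}, p.1 ≠ Q.1 ∧ p.1 ≠ P.1 ∧ p.2 ≠ Q.2 ∧ p.2 ≠ P.2) ∧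
    ((ρ \ {P, Q}) ∩ B).card = i := by
  simp only [Z2s, mem_filter, mem_TS] at ht
  obtain ⟨⟨hρ, hPm, hQm, hPQ⟩, hcr⟩ := ht
  obtain ⟨hna, hcard, hlevel⟩ := mem_Pset.mp hρ
  obtain ⟨hPρ, hPB⟩ := mem_inter.mp hPm
  obtain ⟨hQρ, hQB⟩ := mem_inter.mp hQm
  obtain ⟨h1, h2⟩ := hna P hPρ Q hQρ hPQ
  have hsub : ({P, Q} : Finset C) ⊆ ρ := by
    intro z hz
    rcases mem_insert.mp hz with rfl | hz
    · exact hPρ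
    · rw [mem_singleton.mp hz]; exact hQρ
  have hsub2 : ({P, Q} : Finset C) ⊆ ρ ∩ B := by
    intro z hz
    rcases mem_insert.mp hz with rfl | hz
    · exact mem_inter.mpr ⟨hPρ, hPB⟩
    · rw [mem_singleton.mp hz]; exact mem_inter.mpr ⟨hQρ, hQB⟩
  refine ⟨hPρ, hQρ, hPQ, h1.symm, h2.symm, ?_, ?_, na_subset sdiff_subset hna, ?_, ?_, ?_⟩
  · ext x
    simp only [mem_union, mem_insert, mem_singleton, mem_sdiff, Prod.mk.eta]
    constructor
    · rintro (hx | rfl)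
      · by_cases hxP : x = P
        · exact Or.inl (Or.inr (Or.inr hxP))
        by_cases hxQ : x = Q
        · exact Or.inl (Or.inl hxQ)
        · exact Or.inr ⟨hx, by tauto⟩
      · exact Or.inl (Or.inr (Or.inl rfl))
    · rintro ((rfl | rfl | rfl) | ⟨hx, _⟩)
      · exact Or.inl hQρ
      · exact Or.inr rfl
      · exact Or.inl hPρ
      · exact Or.inl hx
  · intro z hz
    simp only [mem_insert, mem_singleton, Prod.mk.eta] at hz
    rcases hz with rfl | rfl | rfl
    · exact hQB
    · exact hcr
    · exact hPB
  · rw [card_sdiff_of_subset hsub, hcard, card_pair hPQ]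
  · intro p hp
    obtain ⟨hpρ, hpPQ⟩ := mem_sdiff.mp hp
    have hpP : p ≠ P := fun h => hpPQ (by simp [h])
    have hpQ : p ≠ Q := fun h => hpPQ (by simp [h])
    exact ⟨(hna p hpρ Q hQρ hpQ).1, (hna p hpρ P hPρ hpP).1,
      (hna p hpρ Q hQρ hpQ).2, (hna p hpρ P hPρ hpP).2⟩
  · have hi : (ρ \ {P, Q}) ∩ B = (ρ ∩ B) \ {P, Q} := by
      ext z
      simp only [mem_sdiff, mem_inter, mem_insert, mem_singleton]
      tauto
    rw [hi, card_sdiff_of_subset hsub2, hlevel, card_pair hPQ]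
    omega

open scoped Classical in
noncomputable def Zset (B : Finset C) (i : ℕ) : Finset (Finset C) :=
  univ.filter fun σ => ∃ (a d b c : Fin n) (τ : Finset C),
    a ≠ d ∧ b ≠ c ∧ σ = {(a, b), (a, c), (d, c)} ∪ τ ∧
    ({(a, b), (a, c), (d, c)} : Finset C) ⊆ B ∧
    nonattacking τ ∧ τ.card = n - 2 ∧
    (∀ p ∈ τ, p.1 ≠ a ∧ p.1 ≠ d ∧ p.2 ≠ b ∧ p.2 ≠ c) ∧
    ((τ ∩ B).card : ℤ) = (i : ℤ)

open scoped Classical in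
lemma hitZ_eq (B : Finset C) (i : ℕ) : hitZ B (i : ℤ) = (Zset B i).card := by
  rw [hitZ, Nat.card_eq_fintype_card, Fintype.card_subtype]
  congr 1

lemma MZ (B : Finset C) (i : ℕ) : hitZ B (i : ℤ) = (Z2s B i).card := by
  rw [hitZ_eq]
  have hmaps : ∀ t ∈ Z2s B i, t.1 ∪ {(t.2.2.1, t.2.1.2)} ∈ Zset B i := by
    rintro ⟨ρ, P, Q⟩ ht
    obtain ⟨_, _, _, k1, k2, k3, k4, k5, k6, k7, k8⟩ := Z_decomp ht
    simp only [Zset, mem_filter, mem_univ, true_and]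
    exact ⟨Q.1, P.1, Q.2, P.2, ρ \ {P, Q}, k1, k2, k3, k4, k5, k6, k7, by exact_mod_cast k8⟩
  rw [Finset.card_eq_sum_card_fiberwise hmaps]
  have hfib : ∀ σ ∈ Zset B i,
      ((Z2s B i).filter fun t => t.1 ∪ {(t.2.2.1, t.2.1.2)} = σ).card = 1 := by
    intro σ hσmem
    simp only [Zset, mem_filter, mem_univ, true_and] at hσmem
    obtain ⟨a, d, b, c, τ, had, hbc, hσ, hB, hτ, hτc, hav, hτi⟩ := hσmem
    have hτi' : (τ ∩ B).card = i := by exact_mod_cast hτi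
    have hn : 2 ≤ n := two_le_of_ne had
    have hab : ((a, b) : C) ∈ B := hB (by simp)
    have hac : ((a, c) : C) ∈ B := hB (by simp)
    have hdc : ((d, c) : C) ∈ B := hB (by simp)
    set ρ0 : Finset C := τ ∪ {(a, b), (d, c)} with hρ0def
    have hρ0 : ρ0 ∈ Pset B (i+2) :=
      build_Pset2 hτ hτc hn hτi' had hbc
        (fun p hp => ⟨(hav p hp).1, (hav p hp).2.2.1⟩)
        (fun p hp => ⟨(hav p hp).2.1, (hav p hp).2.2.2⟩) hab hdc
    have hPmem : ((d, c) : C) ∈ ρ0 := by simp [hρ0def]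
    have hQmem : ((a, b) : C) ∈ ρ0 := by simp [hρ0def]
    have hPQne : ((d, c) : C) ≠ (a, b) := fun h => had (congrArg Prod.fst h).symm
    have ht0 : (ρ0, (d, c), (a, b)) ∈ Z2s B i := by
      simp only [Z2s, mem_filter, mem_TS]
      exact ⟨⟨hρ0, mem_inter.mpr ⟨hPmem, hdc⟩, mem_inter.mpr ⟨hQmem, hab⟩, hPQne⟩, hac⟩
    have hGt0 : ρ0 ∪ {((a : Fin n), c)} = σ := by
      rw [hσ]
      ext x
      simp only [mem_union, mem_insert, mem_singleton, hρ0def]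
      constructor
      · rintro ((hx | rfl | rfl) | rfl)
        · exact Or.inr hx
        · exact Or.inl (Or.inl rfl)
        · exact Or.inl (Or.inr (Or.inr rfl))
        · exact Or.inl (Or.inr (Or.inl rfl))
      · rintro ((rfl | rfl | rfl) | hx)
        · exact Or.inl (Or.inr (Or.inl rfl))
        · exact Or.inr rfl
        · exact Or.inl (Or.inr (Or.inr rfl))
        · exact Or.inl (Or.inl hx)
    rw [card_eq_one]
    refine ⟨(ρ0, (d, c), (a, b)), ?_⟩
    ext t
    obtain ⟨ρ, P, Q⟩ := t
    simp only [mem_filter, mem_singleton]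
    constructor
    · rintro ⟨htZ, hG⟩
      obtain ⟨hPρ, hQρ, hPQ, k1, k2, k3, k4, k5, k6, k7, k8⟩ := Z_decomp htZ
      have heq : ({(a, b), (a, c), (d, c)} : Finset C) ∪ τ
          = {(Q.1, Q.2), (Q.1, P.2), (P.1, P.2)} ∪ (ρ \ {P, Q}) := by
        rw [← hσ, ← hG]; exact k3
      obtain ⟨e1, e2, e3, e4, e5⟩ := U_Z had hbc hτ hav k1 k2 k5 k7 heq
      have hPeq : P = ((d : Fin n), c) := by rw [← e3, ← e4]
      have hQeq : Q = ((a : Fin n), b) := by rw [← e1, ← e2]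
      have hρsub : ({P, Q} : Finset C) ⊆ ρ := by
        intro z hz
        rcases mem_insert.mp hz with rfl | hz
        · exact hPρ
        · rw [mem_singleton.mp hz]; exact hQρ
      have hρeq : ρ = ρ0 := by
        rw [← sdiff_union_of_subset hρsub, e5, hPeq, hQeq, hρ0def, pair_comm]
      rw [Prod.mk.injEq, Prod.mk.injEq]
      exact ⟨hρeq, hPeq, hQeq⟩
    · intro h
      rw [Prod.mk.injEq, Prod.mk.injEq] at h
      obtain ⟨h1, h2, h3⟩ := h
      subst h1; subst h2; subst h3
      exact ⟨ht0, hGt0⟩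
  rw [Finset.sum_congr rfl hfib, Finset.sum_const, smul_eq_mul, mul_one]

end SquareChain

namespace SquareChain

variable {n : ℕ}

local notation "C" => (Fin n × Fin n)

lemma WR_id {ρ : Finset C} {P Q : C} (hPρ : P ∈ ρ) (hPQ : P ≠ Q) :
    ρ \ {Q} ∪ {(Q.1, P.2)} = ({(Q.1, P.2), (P.1, P.2)} : Finset C) ∪ (ρ \ {P, Q}) := by
  ext x
  simp only [mem_union, mem_sdiff, mem_insert, mem_singleton, Prod.mk.eta]
  constructor
  · rintro (⟨hx, hxQ⟩ | rfl)
    · by_cases hxP : x = P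
      · exact Or.inl (Or.inr hxP)
      · exact Or.inr ⟨hx, by tauto⟩
    · exact Or.inl (Or.inl rfl)
  · rintro ((rfl | rfl) | ⟨hx, hx2⟩)
    · exact Or.inr rfl
    · exact Or.inl ⟨hPρ, hPQ⟩
    · exact Or.inl ⟨hx, by tauto⟩

lemma avoid3 {ρ : Finset C} {P Q : C} (hna : nonattacking ρ)
    (hPρ : P ∈ ρ) (hQρ : Q ∈ ρ) :
    ∀ p ∈ ρ \ {P, Q}, p.1 ≠ Q.1 ∧ p.1 ≠ P.1 ∧ p.2 ≠ Q.2 ∧ p.2 ≠ P.2 := by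
  intro p hp
  obtain ⟨hpρ, hpPQ⟩ := mem_sdiff.mp hp
  have hpP : p ≠ P := fun h => hpPQ (by simp [h])
  have hpQ : p ≠ Q := fun h => hpPQ (by simp [h])
  exact ⟨(hna p hpρ Q hQρ hpQ).1, (hna p hpρ P hPρ hpP).1,
    (hna p hpρ Q hQρ hpQ).2, (hna p hpρ P hPρ hpP).2⟩

lemma sdiff_two_card {ρ : Finset C} {P Q : C} (hcard : ρ.card = n)
    (hPρ : P ∈ ρ) (hQρ : Q ∈ ρ) (hPQ : P ≠ Q) : (ρ \ {P, Q}).card = n - 2 := by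
  have hsub : ({P, Q} : Finset C) ⊆ ρ := by
    intro z hz
    rcases mem_insert.mp hz with rfl | hz
    · exact hPρ
    · rw [mem_singleton.mp hz]; exact hQρ
  rw [card_sdiff_of_subset hsub, hcard, card_pair hPQ]

/-- Decomposition data extracted from an element of `ARs ∪ Z2s`. -/
lemma WR_decomp {B : Finset C} {i : ℕ} {ρ : Finset C} {P Q : C}
    (ht : (ρ, P, Q) ∈ ARs B i ∪ Z2s B i) :
    nonattacking ρ ∧ ρ.card = n ∧ P ∈ ρ ∧ Q ∈ ρ ∧ P ≠ Q ∧ Q.1 ≠ P.1 ∧ Q.2 ≠ P.2 ∧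
    P ∈ B ∧ (Q.1, P.2) ∈ B ∧
    nonattacking (ρ \ {P, Q}) ∧ (ρ \ {P, Q}).card = n - 2 ∧
    (∀ p ∈ ρ \ {P, Q}, p.1 ≠ Q.1 ∧ p.1 ≠ P.1 ∧ p.2 ≠ P.2) ∧
    ((ρ \ {P, Q}) ∩ B).card = i := by
  rcases mem_union.mp ht with h | h
  · simp only [ARs, mem_filter, mem_TA] at h
    obtain ⟨⟨hρ, hPm, hQm⟩, hcr⟩ := h
    obtain ⟨hna, hcard, hlevel⟩ := mem_Pset.mp hρ
    obtain ⟨hPρ, hPB⟩ := mem_inter.mp hPm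
    obtain ⟨hQρ, hQB⟩ := mem_sdiff.mp hQm
    have hPQ : P ≠ Q := fun h => hQB (h ▸ hPB)
    obtain ⟨h1, h2⟩ := hna P hPρ Q hQρ hPQ
    refine ⟨hna, hcard, hPρ, hQρ, hPQ, h1.symm, h2.symm, hPB, hcr,
      na_subset sdiff_subset hna, sdiff_two_card hcard hPρ hQρ hPQ,
      fun p hp => ⟨(avoid3 hna hPρ hQρ p hp).1, (avoid3 hna hPρ hQρ p hp).2.1,
        (avoid3 hna hPρ hQρ p hp).2.2.2⟩, ?_⟩
    have hid : (ρ \ {P, Q}) ∩ B = (ρ ∩ B) \ {P} := by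
      ext z
      simp only [mem_sdiff, mem_inter, mem_insert, mem_singleton]
      constructor
      · rintro ⟨⟨hz, hz2⟩, hzB⟩
        exact ⟨⟨hz, hzB⟩, by tauto⟩
      · rintro ⟨⟨hz, hzB⟩, hzP⟩
        refine ⟨⟨hz, fun hh => ?_⟩, hzB⟩
        rcases hh with rfl | rfl
        · exact hzP rfl
        · exact hQB hzB
    rw [hid, card_sdiff_of_subset (by intro z hz; rw [mem_singleton.mp hz]; exact hPm), hlevel,
      card_singleton]
    omega
  · obtain ⟨hPρ, hQρ, hPQ, k1, k2, k3, k4, k5, k6, k7, k8⟩ := Z_decomp h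
    simp only [Z2s, mem_filter, mem_TS] at h
    obtain ⟨⟨hρ, hPm, hQm, _⟩, hcr⟩ := h
    obtain ⟨hna, hcard, _⟩ := mem_Pset.mp hρ
    exact ⟨hna, hcard, hPρ, hQρ, hPQ, k1, k2, (mem_inter.mp hPm).2, hcr,
      k5, k6, fun p hp => ⟨(k7 p hp).1, (k7 p hp).2.1, (k7 p hp).2.2.2⟩, k8⟩

open scoped Classical in
noncomputable def WRset (B : Finset C) (i : ℕ) : Finset (Finset C) :=
  univ.filter fun σ => ∃ (a d c : Fin n) (τ : Finset C),
    a ≠ d ∧ σ = {(a, c), (d, c)} ∪ τ ∧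
    ({(a, c), (d, c)} : Finset C) ⊆ B ∧
    nonattacking τ ∧ τ.card = n - 2 ∧
    (∀ p ∈ τ, p.1 ≠ a ∧ p.1 ≠ d ∧ p.2 ≠ c) ∧
    ((τ ∩ B).card : ℤ) = (i : ℤ)

open scoped Classical in
lemma hitWR_eq (B : Finset C) (i : ℕ) : hitWR B (i : ℤ) = (WRset B i).card := by
  rw [hitWR, Nat.card_eq_fintype_card, Fintype.card_subtype]
  congr 1

set_option maxHeartbeats 1000000 in
lemma MWR (B : Finset C) (i : ℕ) :
    2 * hitWR B (i : ℤ) = (ARs B i).card + (Z2s B i).card := by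
  have hdisj : Disjoint (ARs B i) (Z2s B i) := by
    rw [disjoint_left]
    rintro ⟨ρ, P, Q⟩ hA hZ
    simp only [ARs, mem_filter, mem_TA] at hA
    simp only [Z2s, mem_filter, mem_TS] at hZ
    have e1 := (mem_Pset.mp hA.1.1).2.2
    have e2 := (mem_Pset.mp hZ.1.1).2.2
    omega
  rw [hitWR_eq, ← card_union_of_disjoint hdisj]
  have hmaps : ∀ t ∈ ARs B i ∪ Z2s B i,
      t.1 \ {t.2.2} ∪ {(t.2.2.1, t.2.1.2)} ∈ WRset B i := by
    rintro ⟨ρ, P, Q⟩ ht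
    obtain ⟨hna, hcard, hPρ, hQρ, hPQ, k1, k2, hPB, hcr, k5, k6, k7, k8⟩ := WR_decomp ht
    simp only [WRset, mem_filter, mem_univ, true_and]
    refine ⟨Q.1, P.1, P.2, ρ \ {P, Q}, k1, WR_id hPρ hPQ, ?_, k5, k6, k7, by exact_mod_cast k8⟩
    intro z hz
    simp only [mem_insert, mem_singleton, Prod.mk.eta] at hz
    rcases hz with rfl | rfl
    · exact hcr
    · exact hPB
  rw [Finset.card_eq_sum_card_fiberwise hmaps]
  have hfib : ∀ σ ∈ WRset B i,
      (((ARs B i ∪ Z2s B i)).filter fun t => t.1 \ {t.2.2} ∪ {(t.2.2.1, t.2.1.2)} = σ).card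
        = 2 := by
    intro σ hσmem
    simp only [WRset, mem_filter, mem_univ, true_and] at hσmem
    obtain ⟨a, d, c, τ, had, hσ, hB, hτ, hτc, hav, hτi⟩ := hσmem
    have hτi' : (τ ∩ B).card = i := by exact_mod_cast hτi
    have hn : 2 ≤ n := two_le_of_ne had
    have hac : ((a, c) : C) ∈ B := hB (by simp)
    have hdc : ((d, c) : C) ∈ B := hB (by simp)
    -- the unique free column b'
    have hcnotin : c ∉ τ.image Prod.snd := by
      rw [mem_image]
      rintro ⟨x, hx, rfl⟩
      exact (hav x hx).2.2 rfl
    have himgcard : (σ.image Prod.snd).card = n - 1 := by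
      have himg : σ.image Prod.snd = insert c (τ.image Prod.snd) := by
        ext z
        simp only [hσ, mem_image, mem_union, mem_insert, mem_singleton]
        constructor
        · rintro ⟨x, (rfl | rfl) | hx, rfl⟩
          · exact Or.inl rfl
          · exact Or.inl rfl
          · exact Or.inr ⟨x, hx, rfl⟩
        · rintro (rfl | ⟨x, hx, rfl⟩)
          · exact ⟨(a, z), Or.inl (Or.inl rfl), rfl⟩
          · exact ⟨x, Or.inr hx, rfl⟩
      have himg2 : (τ.image Prod.snd).card = n - 2 := by
        rw [card_image_of_injOn, hτc]
        intro p hp q hq hpq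
        by_contra hne
        exact (hτ p hp q hq hne).2 hpq
      rw [himg, card_insert_of_notMem hcnotin, himg2]
      omega
    have hcompl : ((univ : Finset (Fin n)) \ σ.image Prod.snd).card = 1 := by
      rw [card_sdiff_of_subset (subset_univ _), card_univ, Fintype.card_fin, himgcard]
      omega
    obtain ⟨b', hb'⟩ := card_eq_one.mp hcompl
    have hb'notin : b' ∉ σ.image Prod.snd := by
      have h0 : b' ∈ (univ : Finset (Fin n)) \ σ.image Prod.snd := by
        rw [hb']; exact mem_singleton_self b'
      exact (mem_sdiff.mp h0).2
    have huniq : ∀ q : Fin n, q ∉ σ.image Prod.snd → q = b' := by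
      intro q hq
      have h0 : q ∈ (univ : Finset (Fin n)) \ σ.image Prod.snd :=
        mem_sdiff.mpr ⟨mem_univ _, hq⟩
      rw [hb'] at h0
      exact mem_singleton.mp h0
    have hb'c : b' ≠ c := by
      intro h
      exact hb'notin (mem_image.mpr ⟨(a, c), by simp [hσ], h.symm⟩)
    have hb'τ : ∀ p ∈ τ, p.2 ≠ b' := by
      intro p hp h
      exact hb'notin (mem_image.mpr ⟨p, by simp [hσ, hp], h⟩)
    have havx1 : ∀ p ∈ τ, p.1 ≠ ((d, c) : C).1 ∧ p.2 ≠ ((d, c) : C).2 :=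
      fun p hp => ⟨(hav p hp).2.1, (hav p hp).2.2⟩
    have havy1 : ∀ p ∈ τ, p.1 ≠ ((a, b') : C).1 ∧ p.2 ≠ ((a, b') : C).2 :=
      fun p hp => ⟨(hav p hp).1, hb'τ p hp⟩
    have havx2 : ∀ p ∈ τ, p.1 ≠ ((a, c) : C).1 ∧ p.2 ≠ ((a, c) : C).2 :=
      fun p hp => ⟨(hav p hp).1, (hav p hp).2.2⟩
    have havy2 : ∀ p ∈ τ, p.1 ≠ ((d, b') : C).1 ∧ p.2 ≠ ((d, b') : C).2 :=
      fun p hp => ⟨(hav p hp).2.1, hb'τ p hp⟩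
    have ht1mem : ((τ ∪ {((d:Fin n), c), (a, b')}, ((d:Fin n), c), ((a:Fin n), b')) : Finset C × C × C)
        ∈ ARs B i ∪ Z2s B i := by
      by_cases hQB : ((a, b') : C) ∈ B
      · refine mem_union_right _ ?_
        simp only [Z2s, mem_filter, mem_TS]
        exact ⟨⟨build_Pset2 hτ hτc hn hτi' (Ne.symm had) (Ne.symm hb'c) havx1 havy1 hdc hQB,
          mem_inter.mpr ⟨by simp, hdc⟩, mem_inter.mpr ⟨by simp, hQB⟩,
          fun h => had (congrArg Prod.fst h).symm⟩, hac⟩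
      · refine mem_union_left _ ?_
        simp only [ARs, mem_filter, mem_TA]
        exact ⟨⟨build_Pset1 hτ hτc hn hτi' (Ne.symm had) (Ne.symm hb'c) havx1 havy1 hdc hQB,
          mem_inter.mpr ⟨by simp, hdc⟩, mem_sdiff.mpr ⟨by simp, hQB⟩⟩, hac⟩
    have ht2mem : ((τ ∪ {((a:Fin n), c), (d, b')}, ((a:Fin n), c), ((d:Fin n), b')) : Finset C × C × C)
        ∈ ARs B i ∪ Z2s B i := by
      by_cases hQB : ((d, b') : C) ∈ B
      · refine mem_union_right _ ?_
        simp only [Z2s, mem_filter, mem_TS]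
        exact ⟨⟨build_Pset2 hτ hτc hn hτi' had (Ne.symm hb'c) havx2 havy2 hac hQB,
          mem_inter.mpr ⟨by simp, hac⟩, mem_inter.mpr ⟨by simp, hQB⟩,
          fun h => had (congrArg Prod.fst h)⟩, hdc⟩
      · refine mem_union_left _ ?_
        simp only [ARs, mem_filter, mem_TA]
        exact ⟨⟨build_Pset1 hτ hτc hn hτi' had (Ne.symm hb'c) havx2 havy2 hac hQB,
          mem_inter.mpr ⟨by simp, hac⟩, mem_sdiff.mpr ⟨by simp, hQB⟩⟩, hdc⟩
    have hGt1 : (τ ∪ {((d:Fin n), c), (a, b')}) \ {((a:Fin n), b')} ∪ {((a:Fin n), c)} = σ := by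
      ext x
      simp only [hσ, mem_union, mem_sdiff, mem_insert, mem_singleton]
      constructor
      · rintro (⟨hx | rfl | rfl, hxne⟩ | rfl)
        · exact Or.inr hx
        · exact Or.inl (Or.inr rfl)
        · exact absurd rfl hxne
        · exact Or.inl (Or.inl rfl)
      · rintro ((rfl | rfl) | hx)
        · exact Or.inr rfl
        · exact Or.inl ⟨Or.inr (Or.inl rfl), fun h => had (congrArg Prod.fst h).symm⟩
        · exact Or.inl ⟨Or.inl hx, fun h => hb'τ x hx (congrArg Prod.snd h)⟩
    have hGt2 : (τ ∪ {((a:Fin n), c), (d, b')}) \ {((d:Fin n), b')} ∪ {((d:Fin n), c)} = σ := by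
      ext x
      simp only [hσ, mem_union, mem_sdiff, mem_insert, mem_singleton]
      constructor
      · rintro (⟨hx | rfl | rfl, hxne⟩ | rfl)
        · exact Or.inr hx
        · exact Or.inl (Or.inl rfl)
        · exact absurd rfl hxne
        · exact Or.inl (Or.inr rfl)
      · rintro ((rfl | rfl) | hx)
        · exact Or.inl ⟨Or.inr (Or.inl rfl), fun h => had (congrArg Prod.fst h)⟩
        · exact Or.inr rfl
        · exact Or.inl ⟨Or.inl hx, fun h => hb'τ x hx (congrArg Prod.snd h)⟩
    have key : ∀ ρ (P Q : C), ((ρ, P, Q) ∈ ARs B i ∪ Z2s B i) →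
        (ρ \ {Q} ∪ {(Q.1, P.2)} = σ) →
        (ρ, P, Q) = (τ ∪ {((d:Fin n), c), (a, b')}, ((d:Fin n), c), ((a:Fin n), b')) ∨
        (ρ, P, Q) = (τ ∪ {((a:Fin n), c), (d, b')}, ((a:Fin n), c), ((d:Fin n), b')) := by
      intro ρ P Q ht hG
      obtain ⟨hna, hcard, hPρ, hQρ, hPQ, k1, k2, hPB, hcr, k5, k6, k7, k8⟩ := WR_decomp ht
      have heq : ({(a, c), (d, c)} : Finset C) ∪ τ
          = {(Q.1, P.2), (P.1, P.2)} ∪ (ρ \ {P, Q}) := by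
        rw [← hσ, ← hG]
        exact WR_id hPρ hPQ
      obtain ⟨ec, hsplit, eτ⟩ := U_WR had hτ hav k1 k5 k7 heq
      have hρsub : ({P, Q} : Finset C) ⊆ ρ := by
        intro z hz
        rcases mem_insert.mp hz with rfl | hz
        · exact hPρ
        · rw [mem_singleton.mp hz]; exact hQρ
      have hQ2 : Q.2 = b' := by
        apply huniq
        rw [mem_image]
        rintro ⟨x, hxσ, hx2⟩
        rw [hσ] at hxσ
        rcases mem_union.mp hxσ with hx | hx
        · have hxc : x.2 = c := by
            rcases mem_insert.mp hx with rfl | hx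
            · rfl
            · rw [mem_singleton.mp hx]
          rw [hxc] at hx2
          exact (ec ▸ k2) hx2.symm
        · rw [← eτ] at hx
          obtain ⟨hxρ, hxPQ⟩ := mem_sdiff.mp hx
          have hxQ : x ≠ Q := fun h => hxPQ (by simp [h])
          exact (hna x hxρ Q hQρ hxQ).2 hx2
      rcases hsplit with ⟨ea, ed⟩ | ⟨ea, ed⟩
      · left
        have hPeq : P = ((d : Fin n), c) := by rw [← ed, ← ec]
        have hQeq : Q = ((a : Fin n), b') := by rw [← ea, ← hQ2]
        have hρeq : ρ = τ ∪ {((d:Fin n), c), (a, b')} := by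
          rw [← sdiff_union_of_subset hρsub, eτ, hPeq, hQeq]
        rw [Prod.mk.injEq, Prod.mk.injEq]
        exact ⟨hρeq, hPeq, hQeq⟩
      · right
        have hPeq : P = ((a : Fin n), c) := by rw [← ed, ← ec]
        have hQeq : Q = ((d : Fin n), b') := by rw [← ea, ← hQ2]
        have hρeq : ρ = τ ∪ {((a:Fin n), c), (d, b')} := by
          rw [← sdiff_union_of_subset hρsub, eτ, hPeq, hQeq]
        rw [Prod.mk.injEq, Prod.mk.injEq]
        exact ⟨hρeq, hPeq, hQeq⟩
    have hfilter : (((ARs B i ∪ Z2s B i)).filter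
        fun t => t.1 \ {t.2.2} ∪ {(t.2.2.1, t.2.1.2)} = σ)
        = {(τ ∪ {((d:Fin n), c), (a, b')}, ((d:Fin n), c), ((a:Fin n), b')),
           (τ ∪ {((a:Fin n), c), (d, b')}, ((a:Fin n), c), ((d:Fin n), b'))} := by
      ext t
      obtain ⟨ρ, P, Q⟩ := t
      simp only [mem_filter, mem_insert, mem_singleton]
      constructor
      · rintro ⟨ht, hG⟩
        exact key ρ P Q ht hG
      · rintro (h | h) <;>
          (rw [Prod.mk.injEq, Prod.mk.injEq] at h; obtain ⟨h1, h2, h3⟩ := h;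
            subst h1; subst h2; subst h3)
        · exact ⟨ht1mem, hGt1⟩
        · exact ⟨ht2mem, hGt2⟩
    rw [hfilter, card_insert_of_notMem, card_singleton]
    rw [mem_singleton]
    intro h
    exact had (congrArg (fun t => t.2.1.1) h).symm
  rw [Finset.sum_congr rfl hfib, Finset.sum_const, smul_eq_mul, mul_comm]

end SquareChain

namespace SquareChain

variable {n : ℕ}

local notation "C" => (Fin n × Fin n)

lemma WC_id {ρ : Finset C} {P Q : C} (hPρ : P ∈ ρ) (hPQ : P ≠ Q) :
    ρ \ {Q} ∪ {(P.1, Q.2)} = ({(P.1, P.2), (P.1, Q.2)} : Finset C) ∪ (ρ \ {P, Q}) := by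
  ext x
  simp only [mem_union, mem_sdiff, mem_insert, mem_singleton, Prod.mk.eta]
  constructor
  · rintro (⟨hx, hxQ⟩ | rfl)
    · by_cases hxP : x = P
      · exact Or.inl (Or.inl hxP)
      · exact Or.inr ⟨hx, by tauto⟩
    · exact Or.inl (Or.inr rfl)
  · rintro ((rfl | rfl) | ⟨hx, hx2⟩)
    · exact Or.inl ⟨hPρ, hPQ⟩
    · exact Or.inr rfl
    · exact Or.inl ⟨hx, by tauto⟩

/-- Decomposition data extracted from an element of `ACs ∪ Z2s'`. -/
lemma WC_decomp {B : Finset C} {i : ℕ} {ρ : Finset C} {P Q : C}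
    (ht : (ρ, P, Q) ∈ ACs B i ∪ Z2s' B i) :
    nonattacking ρ ∧ ρ.card = n ∧ P ∈ ρ ∧ Q ∈ ρ ∧ P ≠ Q ∧ P.1 ≠ Q.1 ∧ P.2 ≠ Q.2 ∧
    P ∈ B ∧ (P.1, Q.2) ∈ B ∧
    nonattacking (ρ \ {P, Q}) ∧ (ρ \ {P, Q}).card = n - 2 ∧
    (∀ p ∈ ρ \ {P, Q}, p.1 ≠ P.1 ∧ p.2 ≠ P.2 ∧ p.2 ≠ Q.2) ∧
    ((ρ \ {P, Q}) ∩ B).card = i := by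
  rcases mem_union.mp ht with h | h
  · simp only [ACs, mem_filter, mem_TA] at h
    obtain ⟨⟨hρ, hPm, hQm⟩, hcr⟩ := h
    obtain ⟨hna, hcard, hlevel⟩ := mem_Pset.mp hρ
    obtain ⟨hPρ, hPB⟩ := mem_inter.mp hPm
    obtain ⟨hQρ, hQB⟩ := mem_sdiff.mp hQm
    have hPQ : P ≠ Q := fun h => hQB (h ▸ hPB)
    obtain ⟨h1, h2⟩ := hna P hPρ Q hQρ hPQ
    refine ⟨hna, hcard, hPρ, hQρ, hPQ, h1, h2, hPB, hcr,
      na_subset sdiff_subset hna, sdiff_two_card hcard hPρ hQρ hPQ,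
      fun p hp => ⟨(avoid3 hna hPρ hQρ p hp).2.1, (avoid3 hna hPρ hQρ p hp).2.2.2,
        (avoid3 hna hPρ hQρ p hp).2.2.1⟩, ?_⟩
    have hid : (ρ \ {P, Q}) ∩ B = (ρ ∩ B) \ {P} := by
      ext z
      simp only [mem_sdiff, mem_inter, mem_insert, mem_singleton]
      constructor
      · rintro ⟨⟨hz, hz2⟩, hzB⟩
        exact ⟨⟨hz, hzB⟩, by tauto⟩
      · rintro ⟨⟨hz, hzB⟩, hzP⟩
        refine ⟨⟨hz, fun hh => ?_⟩, hzB⟩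
        rcases hh with rfl | rfl
        · exact hzP rfl
        · exact hQB hzB
    rw [hid, card_sdiff_of_subset (by intro z hz; rw [mem_singleton.mp hz]; exact hPm), hlevel,
      card_singleton]
    omega
  · simp only [Z2s', mem_filter, mem_TS] at h
    obtain ⟨⟨hρ, hPm, hQm, hPQ⟩, hcr⟩ := h
    obtain ⟨hna, hcard, hlevel⟩ := mem_Pset.mp hρ
    obtain ⟨hPρ, hPB⟩ := mem_inter.mp hPm
    obtain ⟨hQρ, hQB⟩ := mem_inter.mp hQm
    obtain ⟨h1, h2⟩ := hna P hPρ Q hQρ hPQ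
    have hsub2 : ({P, Q} : Finset C) ⊆ ρ ∩ B := by
      intro z hz
      rcases mem_insert.mp hz with rfl | hz
      · exact mem_inter.mpr ⟨hPρ, hPB⟩
      · rw [mem_singleton.mp hz]; exact mem_inter.mpr ⟨hQρ, hQB⟩
    refine ⟨hna, hcard, hPρ, hQρ, hPQ, h1, h2, hPB, hcr,
      na_subset sdiff_subset hna, sdiff_two_card hcard hPρ hQρ hPQ,
      fun p hp => ⟨(avoid3 hna hPρ hQρ p hp).2.1, (avoid3 hna hPρ hQρ p hp).2.2.2,
        (avoid3 hna hPρ hQρ p hp).2.2.1⟩, ?_⟩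
    have hid : (ρ \ {P, Q}) ∩ B = (ρ ∩ B) \ {P, Q} := by
      ext z
      simp only [mem_sdiff, mem_inter, mem_insert, mem_singleton]
      tauto
    rw [hid, card_sdiff_of_subset hsub2, hlevel, card_pair hPQ]
    omega

open scoped Classical in
noncomputable def WCset (B : Finset C) (i : ℕ) : Finset (Finset C) :=
  univ.filter fun σ => ∃ (a b c : Fin n) (τ : Finset C),
    b ≠ c ∧ σ = {(a, b), (a, c)} ∪ τ ∧
    ({(a, b), (a, c)} : Finset C) ⊆ B ∧
    nonattacking τ ∧ τ.card = n - 2 ∧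
    (∀ p ∈ τ, p.1 ≠ a ∧ p.2 ≠ b ∧ p.2 ≠ c) ∧
    ((τ ∩ B).card : ℤ) = (i : ℤ)

open scoped Classical in
lemma hitWC_eq (B : Finset C) (i : ℕ) : hitWC B (i : ℤ) = (WCset B i).card := by
  rw [hitWC, Nat.card_eq_fintype_card, Fintype.card_subtype]
  congr 1

set_option maxHeartbeats 1000000 in
lemma MWC (B : Finset C) (i : ℕ) :
    2 * hitWC B (i : ℤ) = (ACs B i).card + (Z2s' B i).card := by
  have hdisj : Disjoint (ACs B i) (Z2s' B i) := by
    rw [disjoint_left]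
    rintro ⟨ρ, P, Q⟩ hA hZ
    simp only [ACs, mem_filter, mem_TA] at hA
    simp only [Z2s', mem_filter, mem_TS] at hZ
    have e1 := (mem_Pset.mp hA.1.1).2.2
    have e2 := (mem_Pset.mp hZ.1.1).2.2
    omega
  rw [hitWC_eq, ← card_union_of_disjoint hdisj]
  have hmaps : ∀ t ∈ ACs B i ∪ Z2s' B i,
      t.1 \ {t.2.2} ∪ {(t.2.1.1, t.2.2.2)} ∈ WCset B i := by
    rintro ⟨ρ, P, Q⟩ ht
    obtain ⟨hna, hcard, hPρ, hQρ, hPQ, k1, k2, hPB, hcr, k5, k6, k7, k8⟩ := WC_decomp ht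
    simp only [WCset, mem_filter, mem_univ, true_and]
    refine ⟨P.1, P.2, Q.2, ρ \ {P, Q}, k2, WC_id hPρ hPQ, ?_, k5, k6, k7, by exact_mod_cast k8⟩
    intro z hz
    simp only [mem_insert, mem_singleton, Prod.mk.eta] at hz
    rcases hz with rfl | rfl
    · exact hPB
    · exact hcr
  rw [Finset.card_eq_sum_card_fiberwise hmaps]
  have hfib : ∀ σ ∈ WCset B i,
      (((ACs B i ∪ Z2s' B i)).filter fun t => t.1 \ {t.2.2} ∪ {(t.2.1.1, t.2.2.2)} = σ).card
        = 2 := by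
    intro σ hσmem
    simp only [WCset, mem_filter, mem_univ, true_and] at hσmem
    obtain ⟨a, b, c, τ, hbc, hσ, hB, hτ, hτc, hav, hτi⟩ := hσmem
    have hτi' : (τ ∩ B).card = i := by exact_mod_cast hτi
    have hn : 2 ≤ n := two_le_of_ne hbc
    have hab : ((a, b) : C) ∈ B := hB (by simp)
    have hac : ((a, c) : C) ∈ B := hB (by simp)
    -- the unique free row d'
    have hanotin : a ∉ τ.image Prod.fst := by
      rw [mem_image]
      rintro ⟨x, hx, rfl⟩
      exact (hav x hx).1 rfl
    have himgcard : (σ.image Prod.fst).card = n - 1 := by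
      have himg : σ.image Prod.fst = insert a (τ.image Prod.fst) := by
        ext z
        simp only [hσ, mem_image, mem_union, mem_insert, mem_singleton]
        constructor
        · rintro ⟨x, (rfl | rfl) | hx, rfl⟩
          · exact Or.inl rfl
          · exact Or.inl rfl
          · exact Or.inr ⟨x, hx, rfl⟩
        · rintro (rfl | ⟨x, hx, rfl⟩)
          · exact ⟨(z, b), Or.inl (Or.inl rfl), rfl⟩
          · exact ⟨x, Or.inr hx, rfl⟩
      have himg2 : (τ.image Prod.fst).card = n - 2 := by
        rw [card_image_of_injOn, hτc]
        intro p hp q hq hpq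
        by_contra hne
        exact (hτ p hp q hq hne).1 hpq
      rw [himg, card_insert_of_notMem hanotin, himg2]
      omega
    have hcompl : ((univ : Finset (Fin n)) \ σ.image Prod.fst).card = 1 := by
      rw [card_sdiff_of_subset (subset_univ _), card_univ, Fintype.card_fin, himgcard]
      omega
    obtain ⟨d', hd'⟩ := card_eq_one.mp hcompl
    have hd'notin : d' ∉ σ.image Prod.fst := by
      have h0 : d' ∈ (univ : Finset (Fin n)) \ σ.image Prod.fst := by
        rw [hd']; exact mem_singleton_self d'
      exact (mem_sdiff.mp h0).2
    have huniq : ∀ q : Fin n, q ∉ σ.image Prod.fst → q = d' := by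
      intro q hq
      have h0 : q ∈ (univ : Finset (Fin n)) \ σ.image Prod.fst :=
        mem_sdiff.mpr ⟨mem_univ _, hq⟩
      rw [hd'] at h0
      exact mem_singleton.mp h0
    have hd'a : d' ≠ a := by
      intro h
      exact hd'notin (mem_image.mpr ⟨(a, b), by simp [hσ], h.symm⟩)
    have hd'τ : ∀ p ∈ τ, p.1 ≠ d' := by
      intro p hp h
      exact hd'notin (mem_image.mpr ⟨p, by simp [hσ, hp], h⟩)
    have havx1 : ∀ p ∈ τ, p.1 ≠ ((a, b) : C).1 ∧ p.2 ≠ ((a, b) : C).2 :=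
      fun p hp => ⟨(hav p hp).1, (hav p hp).2.1⟩
    have havy1 : ∀ p ∈ τ, p.1 ≠ ((d', c) : C).1 ∧ p.2 ≠ ((d', c) : C).2 :=
      fun p hp => ⟨hd'τ p hp, (hav p hp).2.2⟩
    have havx2 : ∀ p ∈ τ, p.1 ≠ ((a, c) : C).1 ∧ p.2 ≠ ((a, c) : C).2 :=
      fun p hp => ⟨(hav p hp).1, (hav p hp).2.2⟩
    have havy2 : ∀ p ∈ τ, p.1 ≠ ((d', b) : C).1 ∧ p.2 ≠ ((d', b) : C).2 :=
      fun p hp => ⟨hd'τ p hp, (hav p hp).2.1⟩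
    have ht1mem : ((τ ∪ {((a:Fin n), b), (d', c)}, ((a:Fin n), b), (d', c)) : Finset C × C × C)
        ∈ ACs B i ∪ Z2s' B i := by
      by_cases hQB : ((d', c) : C) ∈ B
      · refine mem_union_right _ ?_
        simp only [Z2s', mem_filter, mem_TS]
        exact ⟨⟨build_Pset2 hτ hτc hn hτi' (Ne.symm hd'a) hbc havx1 havy1 hab hQB,
          mem_inter.mpr ⟨by simp, hab⟩, mem_inter.mpr ⟨by simp, hQB⟩,
          fun h => hd'a (congrArg Prod.fst h).symm⟩, hac⟩
      · refine mem_union_left _ ?_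
        simp only [ACs, mem_filter, mem_TA]
        exact ⟨⟨build_Pset1 hτ hτc hn hτi' (Ne.symm hd'a) hbc havx1 havy1 hab hQB,
          mem_inter.mpr ⟨by simp, hab⟩, mem_sdiff.mpr ⟨by simp, hQB⟩⟩, hac⟩
    have ht2mem : ((τ ∪ {((a:Fin n), c), (d', b)}, ((a:Fin n), c), (d', b)) : Finset C × C × C)
        ∈ ACs B i ∪ Z2s' B i := by
      by_cases hQB : ((d', b) : C) ∈ B
      · refine mem_union_right _ ?_
        simp only [Z2s', mem_filter, mem_TS]
        exact ⟨⟨build_Pset2 hτ hτc hn hτi' (Ne.symm hd'a) (Ne.symm hbc) havx2 havy2 hac hQB,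
          mem_inter.mpr ⟨by simp, hac⟩, mem_inter.mpr ⟨by simp, hQB⟩,
          fun h => hd'a (congrArg Prod.fst h).symm⟩, hab⟩
      · refine mem_union_left _ ?_
        simp only [ACs, mem_filter, mem_TA]
        exact ⟨⟨build_Pset1 hτ hτc hn hτi' (Ne.symm hd'a) (Ne.symm hbc) havx2 havy2 hac hQB,
          mem_inter.mpr ⟨by simp, hac⟩, mem_sdiff.mpr ⟨by simp, hQB⟩⟩, hab⟩
    have hGt1 : (τ ∪ {((a:Fin n), b), (d', c)}) \ {((d':Fin n), c)} ∪ {((a:Fin n), c)} = σ := by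
      ext x
      simp only [hσ, mem_union, mem_sdiff, mem_insert, mem_singleton]
      constructor
      · rintro (⟨hx | rfl | rfl, hxne⟩ | rfl)
        · exact Or.inr hx
        · exact Or.inl (Or.inl rfl)
        · exact absurd rfl hxne
        · exact Or.inl (Or.inr rfl)
      · rintro ((rfl | rfl) | hx)
        · exact Or.inl ⟨Or.inr (Or.inl rfl), fun h => hd'a (congrArg Prod.fst h).symm⟩
        · exact Or.inr rfl
        · exact Or.inl ⟨Or.inl hx, fun h => hd'τ x hx (congrArg Prod.fst h)⟩
    have hGt2 : (τ ∪ {((a:Fin n), c), (d', b)}) \ {((d':Fin n), b)} ∪ {((a:Fin n), b)} = σ := by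
      ext x
      simp only [hσ, mem_union, mem_sdiff, mem_insert, mem_singleton]
      constructor
      · rintro (⟨hx | rfl | rfl, hxne⟩ | rfl)
        · exact Or.inr hx
        · exact Or.inl (Or.inr rfl)
        · exact absurd rfl hxne
        · exact Or.inl (Or.inl rfl)
      · rintro ((rfl | rfl) | hx)
        · exact Or.inr rfl
        · exact Or.inl ⟨Or.inr (Or.inl rfl), fun h => hd'a (congrArg Prod.fst h).symm⟩
        · exact Or.inl ⟨Or.inl hx, fun h => hd'τ x hx (congrArg Prod.fst h)⟩
    have key : ∀ ρ (P Q : C), ((ρ, P, Q) ∈ ACs B i ∪ Z2s' B i) →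
        (ρ \ {Q} ∪ {(P.1, Q.2)} = σ) →
        (ρ, P, Q) = (τ ∪ {((a:Fin n), b), (d', c)}, ((a:Fin n), b), ((d':Fin n), c)) ∨
        (ρ, P, Q) = (τ ∪ {((a:Fin n), c), (d', b)}, ((a:Fin n), c), ((d':Fin n), b)) := by
      intro ρ P Q ht hG
      obtain ⟨hna, hcard, hPρ, hQρ, hPQ, k1, k2, hPB, hcr, k5, k6, k7, k8⟩ := WC_decomp ht
      have heq : ({(a, b), (a, c)} : Finset C) ∪ τ
          = {(P.1, P.2), (P.1, Q.2)} ∪ (ρ \ {P, Q}) := by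
        rw [← hσ, ← hG]
        exact WC_id hPρ hPQ
      obtain ⟨ea, hsplit, eτ⟩ := U_WC hbc hτ hav k2 k5 k7 heq
      have hρsub : ({P, Q} : Finset C) ⊆ ρ := by
        intro z hz
        rcases mem_insert.mp hz with rfl | hz
        · exact hPρ
        · rw [mem_singleton.mp hz]; exact hQρ
      have hQ1 : Q.1 = d' := by
        apply huniq
        rw [mem_image]
        rintro ⟨x, hxσ, hx1⟩
        rw [hσ] at hxσ
        rcases mem_union.mp hxσ with hx | hx
        · have hxa : x.1 = a := by
            rcases mem_insert.mp hx with rfl | hx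
            · rfl
            · rw [mem_singleton.mp hx]
          rw [hxa] at hx1
          exact (ea ▸ k1) hx1
        · rw [← eτ] at hx
          obtain ⟨hxρ, hxPQ⟩ := mem_sdiff.mp hx
          have hxQ : x ≠ Q := fun h => hxPQ (by simp [h])
          exact (hna x hxρ Q hQρ hxQ).1 hx1
      rcases hsplit with ⟨eb, ec⟩ | ⟨eb, ec⟩
      · left
        have hPeq : P = ((a : Fin n), b) := by rw [← ea, ← eb]
        have hQeq : Q = ((d' : Fin n), c) := by rw [← hQ1, ← ec]
        have hρeq : ρ = τ ∪ {((a:Fin n), b), (d', c)} := by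
          rw [← sdiff_union_of_subset hρsub, eτ, hPeq, hQeq]
        rw [Prod.mk.injEq, Prod.mk.injEq]
        exact ⟨hρeq, hPeq, hQeq⟩
      · right
        have hPeq : P = ((a : Fin n), c) := by rw [← ea, ← eb]
        have hQeq : Q = ((d' : Fin n), b) := by rw [← hQ1, ← ec]
        have hρeq : ρ = τ ∪ {((a:Fin n), c), (d', b)} := by
          rw [← sdiff_union_of_subset hρsub, eτ, hPeq, hQeq]
        rw [Prod.mk.injEq, Prod.mk.injEq]
        exact ⟨hρeq, hPeq, hQeq⟩
    have hfilter : (((ACs B i ∪ Z2s' B i)).filter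
        fun t => t.1 \ {t.2.2} ∪ {(t.2.1.1, t.2.2.2)} = σ)
        = {(τ ∪ {((a:Fin n), b), (d', c)}, ((a:Fin n), b), ((d':Fin n), c)),
           (τ ∪ {((a:Fin n), c), (d', b)}, ((a:Fin n), c), ((d':Fin n), b))} := by
      ext t
      obtain ⟨ρ, P, Q⟩ := t
      simp only [mem_filter, mem_insert, mem_singleton]
      constructor
      · rintro ⟨ht, hG⟩
        exact key ρ P Q ht hG
      · rintro (h | h) <;>
          (rw [Prod.mk.injEq, Prod.mk.injEq] at h; obtain ⟨h1, h2, h3⟩ := h;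
            subst h1; subst h2; subst h3)
        · exact ⟨ht1mem, hGt1⟩
        · exact ⟨ht2mem, hGt2⟩
    rw [hfilter, card_insert_of_notMem, card_singleton]
    rw [mem_singleton]
    intro h
    exact hbc (congrArg (fun t => t.2.1.2) h)
  rw [Finset.sum_congr rfl hfib, Finset.sum_const, smul_eq_mul, mul_comm]

end SquareChain

namespace SquareChain

variable {n : ℕ}

local notation "C" => (Fin n × Fin n)

lemma block_eq {a d b c : Fin n} :
    (({a, d} : Finset (Fin n)) ×ˢ ({b, c} : Finset (Fin n)) : Finset C)
      = {(a, b), (a, c), (d, b), (d, c)} := by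
  ext ⟨x, y⟩
  simp only [mem_product, mem_insert, mem_singleton, Prod.mk.injEq]
  tauto

lemma S_id {ρ : Finset C} {P Q : C} (hPρ : P ∈ ρ) (hQρ : Q ∈ ρ) :
    ρ ∪ {(P.1, Q.2), (Q.1, P.2)}
      = ({(P.1, P.2), (P.1, Q.2), (Q.1, P.2), (Q.1, Q.2)} : Finset C) ∪ (ρ \ {P, Q}) := by
  ext x
  simp only [mem_union, mem_sdiff, mem_insert, mem_singleton, Prod.mk.eta]
  constructor
  · rintro (hx | rfl | rfl)
    · by_cases hxP : x = P
      · exact Or.inl (Or.inl hxP)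
      by_cases hxQ : x = Q
      · exact Or.inl (Or.inr (Or.inr (Or.inr hxQ)))
      · exact Or.inr ⟨hx, by tauto⟩
    · exact Or.inl (Or.inr (Or.inl rfl))
    · exact Or.inl (Or.inr (Or.inr (Or.inl rfl)))
  · rintro ((rfl | rfl | rfl | rfl) | ⟨hx, _⟩)
    · exact Or.inl hPρ
    · exact Or.inr (Or.inl rfl)
    · exact Or.inr (Or.inr rfl)
    · exact Or.inl hQρ
    · exact Or.inl hx

/-- Decomposition data extracted from an element of `Sbs`. -/
lemma S_decomp {B : Finset C} {i : ℕ} {ρ : Finset C} {P Q : C}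
    (ht : (ρ, P, Q) ∈ Sbs B i) :
    P ∈ ρ ∧ Q ∈ ρ ∧ P ≠ Q ∧ P.1 ≠ Q.1 ∧ P.2 ≠ Q.2 ∧
    ρ ∪ {(P.1, Q.2), (Q.1, P.2)}
      = ({(P.1, P.2), (P.1, Q.2), (Q.1, P.2), (Q.1, Q.2)} : Finset C) ∪ (ρ \ {P, Q}) ∧
    ({(P.1, P.2), (P.1, Q.2), (Q.1, P.2), (Q.1, Q.2)} : Finset C) ⊆ B ∧
    nonattacking (ρ \ {P, Q}) ∧ (ρ \ {P, Q}).card = n - 2 ∧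
    (∀ p ∈ ρ \ {P, Q}, p.1 ≠ P.1 ∧ p.1 ≠ Q.1 ∧ p.2 ≠ P.2 ∧ p.2 ≠ Q.2) ∧
    ((ρ \ {P, Q}) ∩ B).card = i := by
  simp only [Sbs, mem_filter, mem_TS] at ht
  obtain ⟨⟨hρ, hPm, hQm, hPQ⟩, hcr1, hcr2⟩ := ht
  obtain ⟨hna, hcard, hlevel⟩ := mem_Pset.mp hρ
  obtain ⟨hPρ, hPB⟩ := mem_inter.mp hPm
  obtain ⟨hQρ, hQB⟩ := mem_inter.mp hQm
  obtain ⟨h1, h2⟩ := hna P hPρ Q hQρ hPQ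
  have hsub2 : ({P, Q} : Finset C) ⊆ ρ ∩ B := by
    intro z hz
    rcases mem_insert.mp hz with rfl | hz
    · exact mem_inter.mpr ⟨hPρ, hPB⟩
    · rw [mem_singleton.mp hz]; exact mem_inter.mpr ⟨hQρ, hQB⟩
  refine ⟨hPρ, hQρ, hPQ, h1, h2, S_id hPρ hQρ, ?_,
    na_subset sdiff_subset hna, sdiff_two_card hcard hPρ hQρ hPQ,
    fun p hp => ⟨(avoid3 hna hPρ hQρ p hp).2.1, (avoid3 hna hPρ hQρ p hp).1,
      (avoid3 hna hPρ hQρ p hp).2.2.2, (avoid3 hna hPρ hQρ p hp).2.2.1⟩, ?_⟩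
  · intro z hz
    simp only [mem_insert, mem_singleton, Prod.mk.eta] at hz
    rcases hz with rfl | rfl | rfl | rfl
    · exact hPB
    · exact hcr2
    · exact hcr1
    · exact hQB
  · have hid : (ρ \ {P, Q}) ∩ B = (ρ ∩ B) \ {P, Q} := by
      ext z
      simp only [mem_sdiff, mem_inter, mem_insert, mem_singleton]
      tauto
    rw [hid, card_sdiff_of_subset hsub2, hlevel, card_pair hPQ]
    omega

open scoped Classical in
noncomputable def Sset (B : Finset C) (i : ℕ) : Finset (Finset C) :=
  univ.filter fun σ => ∃ (a d b c : Fin n) (τ : Finset C),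
    a ≠ d ∧ b ≠ c ∧ σ = (({a, d} : Finset (Fin n)) ×ˢ ({b, c} : Finset (Fin n))) ∪ τ ∧
    (({a, d} : Finset (Fin n)) ×ˢ ({b, c} : Finset (Fin n))) ⊆ B ∧
    nonattacking τ ∧ τ.card = n - 2 ∧
    (∀ p ∈ τ, p.1 ≠ a ∧ p.1 ≠ d ∧ p.2 ≠ b ∧ p.2 ≠ c) ∧
    ((τ ∩ B).card : ℤ) = (i : ℤ)

open scoped Classical in
lemma hitS_eq (B : Finset C) (i : ℕ) : hitS B (i : ℤ) = (Sset B i).card := by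
  rw [hitS, Nat.card_eq_fintype_card, Fintype.card_subtype]
  congr 1

set_option maxHeartbeats 1000000 in
lemma MS (B : Finset C) (i : ℕ) : 4 * hitS B (i : ℤ) = (Sbs B i).card := by
  rw [hitS_eq]
  have hmaps : ∀ t ∈ Sbs B i,
      t.1 ∪ {(t.2.1.1, t.2.2.2), (t.2.2.1, t.2.1.2)} ∈ Sset B i := by
    rintro ⟨ρ, P, Q⟩ ht
    obtain ⟨hPρ, hQρ, hPQ, k1, k2, k3, k4, k5, k6, k7, k8⟩ := S_decomp ht
    simp only [Sset, mem_filter, mem_univ, true_and]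
    refine ⟨P.1, Q.1, P.2, Q.2, ρ \ {P, Q}, k1, k2, ?_, ?_, k5, k6, k7, by exact_mod_cast k8⟩
    · rw [block_eq]; exact k3
    · rw [block_eq]; exact k4
  rw [Finset.card_eq_sum_card_fiberwise hmaps]
  have hfib : ∀ σ ∈ Sset B i,
      ((Sbs B i).filter fun t => t.1 ∪ {(t.2.1.1, t.2.2.2), (t.2.2.1, t.2.1.2)} = σ).card
        = 4 := by
    intro σ hσmem
    simp only [Sset, mem_filter, mem_univ, true_and] at hσmem
    obtain ⟨a, d, b, c, τ, had, hbc, hσ0, hB0, hτ, hτc, hav, hτi⟩ := hσmem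
    have hσ : σ = ({(a, b), (a, c), (d, b), (d, c)} : Finset C) ∪ τ := by
      rw [hσ0, block_eq]
    have hB : ({(a, b), (a, c), (d, b), (d, c)} : Finset C) ⊆ B := by
      rw [← block_eq]; exact hB0
    have hτi' : (τ ∩ B).card = i := by exact_mod_cast hτi
    have hn : 2 ≤ n := two_le_of_ne had
    have hab : ((a, b) : C) ∈ B := hB (by simp)
    have hac : ((a, c) : C) ∈ B := hB (by simp)
    have hdb : ((d, b) : C) ∈ B := hB (by simp)
    have hdc : ((d, c) : C) ∈ B := hB (by simp)
    have havab : ∀ p ∈ τ, p.1 ≠ ((a, b) : C).1 ∧ p.2 ≠ ((a, b) : C).2 :=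
      fun p hp => ⟨(hav p hp).1, (hav p hp).2.2.1⟩
    have havac : ∀ p ∈ τ, p.1 ≠ ((a, c) : C).1 ∧ p.2 ≠ ((a, c) : C).2 :=
      fun p hp => ⟨(hav p hp).1, (hav p hp).2.2.2⟩
    have havdb : ∀ p ∈ τ, p.1 ≠ ((d, b) : C).1 ∧ p.2 ≠ ((d, b) : C).2 :=
      fun p hp => ⟨(hav p hp).2.1, (hav p hp).2.2.1⟩
    have havdc : ∀ p ∈ τ, p.1 ≠ ((d, c) : C).1 ∧ p.2 ≠ ((d, c) : C).2 :=
      fun p hp => ⟨(hav p hp).2.1, (hav p hp).2.2.2⟩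
    have hρ1 : τ ∪ {((a:Fin n), b), (d, c)} ∈ Pset B (i+2) :=
      build_Pset2 hτ hτc hn hτi' had hbc havab havdc hab hdc
    have hρ2 : τ ∪ {((a:Fin n), c), (d, b)} ∈ Pset B (i+2) :=
      build_Pset2 hτ hτc hn hτi' had (Ne.symm hbc) havac havdb hac hdb
    have hmem1 : ((a:Fin n), b) ∈ τ ∪ {((a:Fin n), b), (d, c)} := by simp
    have hmem2 : ((d:Fin n), c) ∈ τ ∪ {((a:Fin n), b), (d, c)} := by simp
    have hmem3 : ((a:Fin n), c) ∈ τ ∪ {((a:Fin n), c), (d, b)} := by simp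
    have hmem4 : ((d:Fin n), b) ∈ τ ∪ {((a:Fin n), c), (d, b)} := by simp
    have hne14 : ((a, b) : C) ≠ (d, c) := fun h => had (congrArg Prod.fst h)
    have hne23 : ((a, c) : C) ≠ (d, b) := fun h => had (congrArg Prod.fst h)
    have ht1mem : ((τ ∪ {((a:Fin n), b), (d, c)}, ((a:Fin n), b), ((d:Fin n), c)) : Finset C × C × C)
        ∈ Sbs B i := by
      simp only [Sbs, mem_filter, mem_TS]
      exact ⟨⟨hρ1, mem_inter.mpr ⟨hmem1, hab⟩, mem_inter.mpr ⟨hmem2, hdc⟩, hne14⟩, hdb, hac⟩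
    have ht2mem : ((τ ∪ {((a:Fin n), b), (d, c)}, ((d:Fin n), c), ((a:Fin n), b)) : Finset C × C × C)
        ∈ Sbs B i := by
      simp only [Sbs, mem_filter, mem_TS]
      exact ⟨⟨hρ1, mem_inter.mpr ⟨hmem2, hdc⟩, mem_inter.mpr ⟨hmem1, hab⟩, hne14.symm⟩, hac, hdb⟩
    have ht3mem : ((τ ∪ {((a:Fin n), c), (d, b)}, ((a:Fin n), c), ((d:Fin n), b)) : Finset C × C × C)
        ∈ Sbs B i := by
      simp only [Sbs, mem_filter, mem_TS]
      exact ⟨⟨hρ2, mem_inter.mpr ⟨hmem3, hac⟩, mem_inter.mpr ⟨hmem4, hdb⟩, hne23⟩, hdc, hab⟩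
    have ht4mem : ((τ ∪ {((a:Fin n), c), (d, b)}, ((d:Fin n), b), ((a:Fin n), c)) : Finset C × C × C)
        ∈ Sbs B i := by
      simp only [Sbs, mem_filter, mem_TS]
      exact ⟨⟨hρ2, mem_inter.mpr ⟨hmem4, hdb⟩, mem_inter.mpr ⟨hmem3, hac⟩, hne23.symm⟩, hab, hdc⟩
    have hG1 : (τ ∪ {((a:Fin n), b), (d, c)}) ∪ {((a:Fin n), c), ((d:Fin n), b)} = σ := by
      rw [hσ]; ext x
      simp only [mem_union, mem_insert, mem_singleton]
      constructor
      · rintro ((hx | rfl | rfl) | rfl | rfl)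
        · exact Or.inr hx
        · exact Or.inl (Or.inl rfl)
        · exact Or.inl (Or.inr (Or.inr (Or.inr rfl)))
        · exact Or.inl (Or.inr (Or.inl rfl))
        · exact Or.inl (Or.inr (Or.inr (Or.inl rfl)))
      · rintro ((rfl | rfl | rfl | rfl) | hx)
        · exact Or.inl (Or.inr (Or.inl rfl))
        · exact Or.inr (Or.inl rfl)
        · exact Or.inr (Or.inr rfl)
        · exact Or.inl (Or.inr (Or.inr rfl))
        · exact Or.inl (Or.inl hx)
    have hG2 : (τ ∪ {((a:Fin n), b), (d, c)}) ∪ {((d:Fin n), b), ((a:Fin n), c)} = σ := by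
      rw [hσ]; ext x
      simp only [mem_union, mem_insert, mem_singleton]
      constructor
      · rintro ((hx | rfl | rfl) | rfl | rfl)
        · exact Or.inr hx
        · exact Or.inl (Or.inl rfl)
        · exact Or.inl (Or.inr (Or.inr (Or.inr rfl)))
        · exact Or.inl (Or.inr (Or.inr (Or.inl rfl)))
        · exact Or.inl (Or.inr (Or.inl rfl))
      · rintro ((rfl | rfl | rfl | rfl) | hx)
        · exact Or.inl (Or.inr (Or.inl rfl))
        · exact Or.inr (Or.inr rfl)
        · exact Or.inr (Or.inl rfl)
        · exact Or.inl (Or.inr (Or.inr rfl))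
        · exact Or.inl (Or.inl hx)
    have hG3 : (τ ∪ {((a:Fin n), c), (d, b)}) ∪ {((a:Fin n), b), ((d:Fin n), c)} = σ := by
      rw [hσ]; ext x
      simp only [mem_union, mem_insert, mem_singleton]
      constructor
      · rintro ((hx | rfl | rfl) | rfl | rfl)
        · exact Or.inr hx
        · exact Or.inl (Or.inr (Or.inl rfl))
        · exact Or.inl (Or.inr (Or.inr (Or.inl rfl)))
        · exact Or.inl (Or.inl rfl)
        · exact Or.inl (Or.inr (Or.inr (Or.inr rfl)))
      · rintro ((rfl | rfl | rfl | rfl) | hx)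
        · exact Or.inr (Or.inl rfl)
        · exact Or.inl (Or.inr (Or.inl rfl))
        · exact Or.inl (Or.inr (Or.inr rfl))
        · exact Or.inr (Or.inr rfl)
        · exact Or.inl (Or.inl hx)
    have hG4 : (τ ∪ {((a:Fin n), c), (d, b)}) ∪ {((d:Fin n), c), ((a:Fin n), b)} = σ := by
      rw [hσ]; ext x
      simp only [mem_union, mem_insert, mem_singleton]
      constructor
      · rintro ((hx | rfl | rfl) | rfl | rfl)
        · exact Or.inr hx
        · exact Or.inl (Or.inr (Or.inl rfl))
        · exact Or.inl (Or.inr (Or.inr (Or.inl rfl)))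
        · exact Or.inl (Or.inr (Or.inr (Or.inr rfl)))
        · exact Or.inl (Or.inl rfl)
      · rintro ((rfl | rfl | rfl | rfl) | hx)
        · exact Or.inr (Or.inr rfl)
        · exact Or.inl (Or.inr (Or.inl rfl))
        · exact Or.inl (Or.inr (Or.inr rfl))
        · exact Or.inr (Or.inl rfl)
        · exact Or.inl (Or.inl hx)
    have key : ∀ ρ (P Q : C), ((ρ, P, Q) ∈ Sbs B i) →
        (ρ ∪ {(P.1, Q.2), (Q.1, P.2)} = σ) →
        (ρ, P, Q) = (τ ∪ {((a:Fin n), b), (d, c)}, ((a:Fin n), b), ((d:Fin n), c)) ∨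
        (ρ, P, Q) = (τ ∪ {((a:Fin n), b), (d, c)}, ((d:Fin n), c), ((a:Fin n), b)) ∨
        (ρ, P, Q) = (τ ∪ {((a:Fin n), c), (d, b)}, ((a:Fin n), c), ((d:Fin n), b)) ∨
        (ρ, P, Q) = (τ ∪ {((a:Fin n), c), (d, b)}, ((d:Fin n), b), ((a:Fin n), c)) := by
      intro ρ P Q ht hG
      obtain ⟨hPρ, hQρ, hPQ, k1, k2, k3, k4, k5, k6, k7, k8⟩ := S_decomp ht
      have heq : ({(a, b), (a, c), (d, b), (d, c)} : Finset C) ∪ τ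
          = {(P.1, P.2), (P.1, Q.2), (Q.1, P.2), (Q.1, Q.2)} ∪ (ρ \ {P, Q}) := by
        rw [← hσ, ← hG]
        exact S_id hPρ hQρ
      obtain ⟨hsplit1, hsplit2, eτ⟩ := U_S had hbc hτ hav k1 k2 k5 k7 heq
      have hρsub : ({P, Q} : Finset C) ⊆ ρ := by
        intro z hz
        rcases mem_insert.mp hz with rfl | hz
        · exact hPρ
        · rw [mem_singleton.mp hz]; exact hQρ
      have hρrec : ρ = (ρ \ {P, Q}) ∪ {P, Q} := (sdiff_union_of_subset hρsub).symm
      rcases hsplit1 with ⟨e1, e2⟩ | ⟨e1, e2⟩ <;> rcases hsplit2 with ⟨e3, e4⟩ | ⟨e3, e4⟩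
      · -- P.1 = a, Q.1 = d, P.2 = b, Q.2 = c
        left
        have hPeq : P = ((a : Fin n), b) := by rw [← e1, ← e3]
        have hQeq : Q = ((d : Fin n), c) := by rw [← e2, ← e4]
        have hρeq : ρ = τ ∪ {((a:Fin n), b), (d, c)} := by
          rw [hρrec, eτ, hPeq, hQeq]
        rw [Prod.mk.injEq, Prod.mk.injEq]
        exact ⟨hρeq, hPeq, hQeq⟩
      · -- P.1 = a, Q.1 = d, P.2 = c, Q.2 = b
        right; right; left
        have hPeq : P = ((a : Fin n), c) := by rw [← e1, ← e3]
        have hQeq : Q = ((d : Fin n), b) := by rw [← e2, ← e4]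
        have hρeq : ρ = τ ∪ {((a:Fin n), c), (d, b)} := by
          rw [hρrec, eτ, hPeq, hQeq]
        rw [Prod.mk.injEq, Prod.mk.injEq]
        exact ⟨hρeq, hPeq, hQeq⟩
      · -- P.1 = d, Q.1 = a, P.2 = b, Q.2 = c
        right; right; right
        have hPeq : P = ((d : Fin n), b) := by rw [← e1, ← e3]
        have hQeq : Q = ((a : Fin n), c) := by rw [← e2, ← e4]
        have hρeq : ρ = τ ∪ {((a:Fin n), c), (d, b)} := by
          rw [hρrec, eτ, hPeq, hQeq, pair_comm]
        rw [Prod.mk.injEq, Prod.mk.injEq]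
        exact ⟨hρeq, hPeq, hQeq⟩
      · -- P.1 = d, Q.1 = a, P.2 = c, Q.2 = b
        right; left
        have hPeq : P = ((d : Fin n), c) := by rw [← e1, ← e3]
        have hQeq : Q = ((a : Fin n), b) := by rw [← e2, ← e4]
        have hρeq : ρ = τ ∪ {((a:Fin n), b), (d, c)} := by
          rw [hρrec, eτ, hPeq, hQeq, pair_comm]
        rw [Prod.mk.injEq, Prod.mk.injEq]
        exact ⟨hρeq, hPeq, hQeq⟩
    have hfilter : ((Sbs B i).filter
        fun t => t.1 ∪ {(t.2.1.1, t.2.2.2), (t.2.2.1, t.2.1.2)} = σ)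
        = {(τ ∪ {((a:Fin n), b), (d, c)}, ((a:Fin n), b), ((d:Fin n), c)),
           (τ ∪ {((a:Fin n), b), (d, c)}, ((d:Fin n), c), ((a:Fin n), b)),
           (τ ∪ {((a:Fin n), c), (d, b)}, ((a:Fin n), c), ((d:Fin n), b)),
           (τ ∪ {((a:Fin n), c), (d, b)}, ((d:Fin n), b), ((a:Fin n), c))} := by
      ext t
      obtain ⟨ρ, P, Q⟩ := t
      simp only [mem_filter, mem_insert, mem_singleton]
      constructor
      · rintro ⟨ht, hG⟩
        exact key ρ P Q ht hG
      · rintro (h | h | h | h) <;>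
          (rw [Prod.mk.injEq, Prod.mk.injEq] at h; obtain ⟨h1, h2, h3⟩ := h;
            subst h1; subst h2; subst h3)
        · exact ⟨ht1mem, hG1⟩
        · exact ⟨ht2mem, hG2⟩
        · exact ⟨ht3mem, hG3⟩
        · exact ⟨ht4mem, hG4⟩
    have hPne : ∀ {u v : Finset C × C × C}, u.2.1 ≠ v.2.1 → u ≠ v :=
      fun h h' => h (congrArg (fun t => t.2.1) h')
    have h12 : (τ ∪ {((a:Fin n), b), (d, c)}, ((a:Fin n), b), ((d:Fin n), c))
        ≠ (τ ∪ {((a:Fin n), b), (d, c)}, ((d:Fin n), c), ((a:Fin n), b)) :=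
      hPne (fun h => had (congrArg Prod.fst h))
    have h13 : (τ ∪ {((a:Fin n), b), (d, c)}, ((a:Fin n), b), ((d:Fin n), c))
        ≠ (τ ∪ {((a:Fin n), c), (d, b)}, ((a:Fin n), c), ((d:Fin n), b)) :=
      hPne (fun h => hbc (congrArg Prod.snd h))
    have h14 : (τ ∪ {((a:Fin n), b), (d, c)}, ((a:Fin n), b), ((d:Fin n), c))
        ≠ (τ ∪ {((a:Fin n), c), (d, b)}, ((d:Fin n), b), ((a:Fin n), c)) :=
      hPne (fun h => had (congrArg Prod.fst h))
    have h23 : (τ ∪ {((a:Fin n), b), (d, c)}, ((d:Fin n), c), ((a:Fin n), b))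
        ≠ (τ ∪ {((a:Fin n), c), (d, b)}, ((a:Fin n), c), ((d:Fin n), b)) :=
      hPne (fun h => had (congrArg Prod.fst h).symm)
    have h24 : (τ ∪ {((a:Fin n), b), (d, c)}, ((d:Fin n), c), ((a:Fin n), b))
        ≠ (τ ∪ {((a:Fin n), c), (d, b)}, ((d:Fin n), b), ((a:Fin n), c)) :=
      hPne (fun h => hbc (congrArg Prod.snd h).symm)
    have h34 : (τ ∪ {((a:Fin n), c), (d, b)}, ((a:Fin n), c), ((d:Fin n), b))
        ≠ (τ ∪ {((a:Fin n), c), (d, b)}, ((d:Fin n), b), ((a:Fin n), c)) :=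
      hPne (fun h => had (congrArg Prod.fst h))
    have hnm1 : (τ ∪ {((a:Fin n), b), (d, c)}, ((a:Fin n), b), ((d:Fin n), c)) ∉
        ({(τ ∪ {((a:Fin n), b), (d, c)}, ((d:Fin n), c), ((a:Fin n), b)),
          (τ ∪ {((a:Fin n), c), (d, b)}, ((a:Fin n), c), ((d:Fin n), b)),
          (τ ∪ {((a:Fin n), c), (d, b)}, ((d:Fin n), b), ((a:Fin n), c))} :
          Finset (Finset C × C × C)) := by
      simp only [mem_insert, mem_singleton, not_or]
      exact ⟨h12, h13, h14⟩
    have hnm2 : (τ ∪ {((a:Fin n), b), (d, c)}, ((d:Fin n), c), ((a:Fin n), b)) ∉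
        ({(τ ∪ {((a:Fin n), c), (d, b)}, ((a:Fin n), c), ((d:Fin n), b)),
          (τ ∪ {((a:Fin n), c), (d, b)}, ((d:Fin n), b), ((a:Fin n), c))} :
          Finset (Finset C × C × C)) := by
      simp only [mem_insert, mem_singleton, not_or]
      exact ⟨h23, h24⟩
    have hnm3 : (τ ∪ {((a:Fin n), c), (d, b)}, ((a:Fin n), c), ((d:Fin n), b)) ∉
        ({(τ ∪ {((a:Fin n), c), (d, b)}, ((d:Fin n), b), ((a:Fin n), c))} :
          Finset (Finset C × C × C)) := by
      simpa using h34
    rw [hfilter, card_insert_of_notMem hnm1, card_insert_of_notMem hnm2,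
      card_insert_of_notMem hnm3, card_singleton]
  rw [Finset.sum_congr rfl hfib, Finset.sum_const, smul_eq_mul, mul_comm]

end SquareChain

namespace SquareChain

variable {n : ℕ}

local notation "C" => (Fin n × Fin n)

lemma union_two_sdiff {τ : Finset C} {x y : C} (hx : x ∉ τ) (hy : y ∉ τ) :
    (τ ∪ {x, y}) \ {x, y} = τ := by
  ext z
  simp only [mem_sdiff, mem_union, mem_insert, mem_singleton, not_or]
  constructor
  · rintro ⟨hz | rfl | rfl, hne⟩
    · exact hz
    · exact absurd rfl hne.1
    · exact absurd rfl hne.2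
  · intro hz
    exact ⟨Or.inl hz, fun h => hx (h ▸ hz), fun h => hy (h ▸ hz)⟩

noncomputable def fBad : (Finset C × C × C) × Bool → Finset C × C × C
  | ((ρ, P, Q), true) => (ρ \ {P, Q} ∪ {(P.1, Q.2), (Q.1, P.2)}, (P.1, Q.2), (Q.1, P.2))
  | ((ρ, P, Q), false) => (ρ \ {P, Q} ∪ {(P.1, Q.2), (Q.1, P.2)}, (Q.1, P.2), (P.1, Q.2))

open scoped Classical in
noncomputable def gBad (B : Finset C) (t : Finset C × C × C) : (Finset C × C × C) × Bool :=
  if (t.2.1.1, t.2.2.2) ∈ B then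
    ((t.1 \ {t.2.1, t.2.2} ∪ {(t.2.1.1, t.2.2.2), (t.2.2.1, t.2.1.2)},
      (t.2.1.1, t.2.2.2), (t.2.2.1, t.2.1.2)), true)
  else
    ((t.1 \ {t.2.1, t.2.2} ∪ {(t.2.2.1, t.2.1.2), (t.2.1.1, t.2.2.2)},
      (t.2.2.1, t.2.1.2), (t.2.1.1, t.2.2.2)), false)

/-- facts about an `ABad` element. -/
lemma ABad_decomp {B : Finset C} {i : ℕ} {ρ : Finset C} {P Q : C}
    (ht : (ρ, P, Q) ∈ ABad B i) :
    nonattacking ρ ∧ ρ.card = n ∧ P ∈ ρ ∧ Q ∈ ρ ∧ P ≠ Q ∧ Q.1 ≠ P.1 ∧ Q.2 ≠ P.2 ∧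
    P ∈ B ∧ Q ∉ B ∧ (Q.1, P.2) ∈ B ∧ (P.1, Q.2) ∈ B ∧
    nonattacking (ρ \ {P, Q}) ∧ (ρ \ {P, Q}).card = n - 2 ∧
    ((ρ \ {P, Q}) ∩ B).card = i := by
  have hAR : (ρ, P, Q) ∈ ARs B i := by
    simp only [ABad, mem_filter] at ht
    simp only [ARs, mem_filter]
    exact ⟨ht.1, ht.2.1⟩
  obtain ⟨hna, hcard, hPρ, hQρ, hPQ, k1, k2, hPB, hcr1, hτna, hτc, _, hτi⟩ :=
    WR_decomp (mem_union_left _ hAR)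
  simp only [ABad, mem_filter, mem_TA] at ht
  obtain ⟨⟨_, _, hQm⟩, _, hcr2⟩ := ht
  exact ⟨hna, hcard, hPρ, hQρ, hPQ, k1, k2, hPB, (mem_sdiff.mp hQm).2, hcr1, hcr2,
    hτna, hτc, hτi⟩

set_option maxHeartbeats 1000000 in
lemma MBad (B : Finset C) (i : ℕ) :
    2 * (ABad B i).card + (Sbs B i).card ≤ (TS B i).card := by
  classical
  have hsub : Sbs B i ⊆ TS B i := filter_subset _ _
  have hmaps : ∀ x ∈ (ABad B i) ×ˢ (univ : Finset Bool), fBad x ∈ TS B i \ Sbs B i := by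
    rintro ⟨⟨ρ, P, Q⟩, bl⟩ hx
    have hAB : (ρ, P, Q) ∈ ABad B i := (mem_product.mp hx).1
    obtain ⟨hna, hcard, hPρ, hQρ, hPQ, k1, k2, hPB, hQB, hcr1, hcr2, hτna, hτc, hτi⟩ :=
      ABad_decomp hAB
    have hn : 2 ≤ n := two_le_of_ne k1
    have havoid := avoid3 hna hPρ hQρ
    have hx' : ∀ p ∈ ρ \ {P, Q}, p.1 ≠ ((P.1, Q.2) : C).1 ∧ p.2 ≠ ((P.1, Q.2) : C).2 :=
      fun p hp => ⟨(havoid p hp).2.1, (havoid p hp).2.2.1⟩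
    have hy' : ∀ p ∈ ρ \ {P, Q}, p.1 ≠ ((Q.1, P.2) : C).1 ∧ p.2 ≠ ((Q.1, P.2) : C).2 :=
      fun p hp => ⟨(havoid p hp).1, (havoid p hp).2.2.2⟩
    have hρ' : (ρ \ {P, Q}) ∪ {((P.1 : Fin n), Q.2), (Q.1, P.2)} ∈ Pset B (i+2) :=
      build_Pset2 hτna hτc hn hτi k1.symm k2 hx' hy' hcr2 hcr1
    have hP'mem : ((P.1 : Fin n), Q.2) ∈ (ρ \ {P, Q}) ∪ {((P.1 : Fin n), Q.2), (Q.1, P.2)} := by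
      simp
    have hQ'mem : ((Q.1 : Fin n), P.2) ∈ (ρ \ {P, Q}) ∪ {((P.1 : Fin n), Q.2), (Q.1, P.2)} := by
      simp
    have hne' : ((P.1, Q.2) : C) ≠ (Q.1, P.2) := fun h => k1 (congrArg Prod.fst h).symm
    have hTS1 : ((ρ \ {P, Q}) ∪ {((P.1 : Fin n), Q.2), (Q.1, P.2)},
        ((P.1 : Fin n), Q.2), ((Q.1 : Fin n), P.2)) ∈ TS B i :=
      mem_TS.mpr ⟨hρ', mem_inter.mpr ⟨hP'mem, hcr2⟩, mem_inter.mpr ⟨hQ'mem, hcr1⟩, hne'⟩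
    have hTS2 : ((ρ \ {P, Q}) ∪ {((P.1 : Fin n), Q.2), (Q.1, P.2)},
        ((Q.1 : Fin n), P.2), ((P.1 : Fin n), Q.2)) ∈ TS B i :=
      mem_TS.mpr ⟨hρ', mem_inter.mpr ⟨hQ'mem, hcr1⟩, mem_inter.mpr ⟨hP'mem, hcr2⟩, hne'.symm⟩
    cases bl
    · simp only [fBad]
      rw [mem_sdiff]
      refine ⟨hTS2, ?_⟩
      simp only [Sbs, mem_filter, not_and]
      intro _ _
      exact hQB
    · simp only [fBad]
      rw [mem_sdiff]
      refine ⟨hTS1, ?_⟩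
      simp only [Sbs, mem_filter, not_and]
      intro _ hcontra
      exact fun _ => hQB hcontra
  have hinj : Set.InjOn fBad
      ((((ABad B i) ×ˢ (univ : Finset Bool)) : Finset ((Finset C × C × C) × Bool)) :
        Set ((Finset C × C × C) × Bool)) := by
    have grec : ∀ x ∈ (ABad B i) ×ˢ (univ : Finset Bool), gBad B (fBad x) = x := by
      rintro ⟨⟨ρ, P, Q⟩, bl⟩ hx
      have hAB : (ρ, P, Q) ∈ ABad B i := (mem_product.mp hx).1
      obtain ⟨hna, hcard, hPρ, hQρ, hPQ, k1, k2, hPB, hQB, hcr1, hcr2, hτna, hτc, hτi⟩ :=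
        ABad_decomp hAB
      have havoid := avoid3 hna hPρ hQρ
      have hP'τ : ((P.1, Q.2) : C) ∉ ρ \ {P, Q} := fun h => (havoid _ h).2.1 rfl
      have hQ'τ : ((Q.1, P.2) : C) ∉ ρ \ {P, Q} := fun h => (havoid _ h).1 rfl
      have hsd : ((ρ \ {P, Q}) ∪ {((P.1 : Fin n), Q.2), (Q.1, P.2)})
          \ {((P.1 : Fin n), Q.2), (Q.1, P.2)} = ρ \ {P, Q} := union_two_sdiff hP'τ hQ'τ
      have hsd2 : ((ρ \ {P, Q}) ∪ {((P.1 : Fin n), Q.2), (Q.1, P.2)})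
          \ {((Q.1 : Fin n), P.2), (P.1, Q.2)} = ρ \ {P, Q} := by
        rw [pair_comm ((Q.1 : Fin n), P.2) ((P.1 : Fin n), Q.2)]
        exact hsd
      have hρsub : ({P, Q} : Finset C) ⊆ ρ := by
        intro z hz
        rcases mem_insert.mp hz with rfl | hz
        · exact hPρ
        · rw [mem_singleton.mp hz]; exact hQρ
      have hrec : (ρ \ {P, Q}) ∪ {P, Q} = ρ := sdiff_union_of_subset hρsub
      cases bl
      · simp only [fBad, gBad]
        refine (if_neg (show ¬((Q.1, Q.2) : C) ∈ B from hQB)).trans ?_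
        rw [Prod.mk.injEq, Prod.mk.injEq, Prod.mk.injEq]
        refine ⟨⟨?_, rfl, rfl⟩, rfl⟩
        show ((ρ \ {P, Q}) ∪ {((P.1 : Fin n), Q.2), (Q.1, P.2)})
          \ {((Q.1 : Fin n), P.2), (P.1, Q.2)} ∪ {P, Q} = ρ
        rw [hsd2]
        exact hrec
      · simp only [fBad, gBad]
        refine (if_pos (show ((P.1, P.2) : C) ∈ B from hPB)).trans ?_
        rw [Prod.mk.injEq, Prod.mk.injEq, Prod.mk.injEq]
        refine ⟨⟨?_, rfl, rfl⟩, rfl⟩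
        show ((ρ \ {P, Q}) ∪ {((P.1 : Fin n), Q.2), (Q.1, P.2)})
          \ {((P.1 : Fin n), Q.2), (Q.1, P.2)} ∪ {P, Q} = ρ
        rw [hsd]
        exact hrec
    intro x hx y hy h
    rw [← grec x (mem_coe.mp hx), ← grec y (mem_coe.mp hy), h]
  calc 2 * (ABad B i).card + (Sbs B i).card
      = ((ABad B i) ×ˢ (univ : Finset Bool)).card + (Sbs B i).card := by
        rw [card_product, card_univ, Fintype.card_bool, mul_comm]
    _ ≤ (TS B i \ Sbs B i).card + (Sbs B i).card :=
        Nat.add_le_add_right (card_le_card_of_injOn fBad hmaps hinj) _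
    _ = (TS B i).card := card_sdiff_add_card_eq_card hsub

end SquareChain

namespace SquareChain

variable {n : ℕ}

local notation "C" => (Fin n × Fin n)

lemma MRC (B : Finset C) (i : ℕ) :
    (ARs B i).card + (ACs B i).card ≤ (TA B i).card + (ABad B i).card := by
  have h1 : ARs B i ∩ ACs B i = ABad B i := by
    ext t
    simp only [ARs, ACs, ABad, mem_inter, mem_filter]
    tauto
  have h2 : ARs B i ∪ ACs B i ⊆ TA B i :=
    union_subset (filter_subset _ _) (filter_subset _ _)
  calc (ARs B i).card + (ACs B i).card
      = (ARs B i ∪ ACs B i).card + (ARs B i ∩ ACs B i).card :=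
        (card_union_add_card_inter _ _).symm
    _ ≤ (TA B i).card + (ABad B i).card := by
        rw [h1]
        exact Nat.add_le_add_right (card_le_card h2) _

lemma hit_le {B : Finset C} {k : ℕ} (h : hit B k ≠ 0) : k ≤ n := by
  rw [hit_eq] at h
  obtain ⟨ρ, hρ⟩ := card_ne_zero.mp h
  obtain ⟨hna, hcard, hlev⟩ := mem_Pset.mp hρ
  have := card_le_card (inter_subset_left : ρ ∩ B ⊆ ρ)
  omega

lemma master (B : Finset C) (i : ℕ) :
    4 * hitS B (i : ℤ) + 4 * hitWR B (i : ℤ) + 4 * hitWC B (i : ℤ)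
      ≤ 4 * hitZ B (i : ℤ) + 2 * (TA B i).card + (TS B i).card := by
  have e3 := MZ B i
  have e4 := MS B i
  have e5 := MWR B i
  have e6 := MWC B i
  have e6' := card_Z2s' B i
  have e7 := MBad B i
  have e8 := MRC B i
  omega

end SquareChain

open SquareChain in
/-- For a square board `B ⊆ [n]×[n]` and `i ≥ 0`:
`h_{Z,i} − h_{S,i} − h_{WR,i} − h_{WC,i} + ((i+1)(n−i−1)/2)·h_{i+1} + ((i+1)(i+2)/4)·h_{i+2} ≥ 0`. -/
theorem square_chain_inequality_two {n : ℕ} (B : Finset (Fin n × Fin n)) (i : ℕ) :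
    (0 : ℚ) ≤ (hitZ B (i : ℤ) : ℚ) - (hitS B (i : ℤ) : ℚ) - (hitWR B (i : ℤ) : ℚ) -
      (hitWC B (i : ℤ) : ℚ) +
      (((i : ℚ) + 1) * ((n : ℚ) - (i : ℚ) - 1) / 2) * (hit B (i + 1) : ℚ) +
      (((i : ℚ) + 1) * ((i : ℚ) + 2) / 4) * (hit B (i + 2) : ℚ) := by
  have e1 := card_TA B i
  have e2 := card_TS B i
  have em := master B i
  have key : (4 * (hitS B (i : ℤ) : ℚ) + 4 * (hitWR B (i : ℤ) : ℚ) + 4 * (hitWC B (i : ℤ) : ℚ))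
      ≤ 4 * (hitZ B (i : ℤ) : ℚ) + 2 * ((TA B i).card : ℚ) + ((TS B i).card : ℚ) := by
    exact_mod_cast em
  have hTA : ((TA B i).card : ℚ) = ((i : ℚ) + 1) * ((n : ℚ) - (i : ℚ) - 1) * (hit B (i+1) : ℚ) := by
    rcases eq_or_ne (hit B (i+1)) 0 with h0 | h0
    · rw [e1, h0]
      simp
    · have hle : i + 1 ≤ n := hit_le h0
      rw [e1, Nat.cast_mul, Nat.cast_mul, Nat.cast_sub hle]
      push_cast
      ring
  have hTS : ((TS B i).card : ℚ) = ((i : ℚ) + 1) * ((i : ℚ) + 2) * (hit B (i+2) : ℚ) := by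
    rw [e2]
    push_cast
    ring
  have hq1 : (((i : ℚ) + 1) * ((n : ℚ) - (i : ℚ) - 1) / 2) * (hit B (i + 1) : ℚ)
      = ((TA B i).card : ℚ) / 2 := by
    rw [hTA]; ring
  have hq2 : (((i : ℚ) + 1) * ((i : ℚ) + 2) / 4) * (hit B (i + 2) : ℚ)
      = ((TS B i).card : ℚ) / 4 := by
    rw [hTS]; ring
  rw [hq1, hq2]
  linarith [key]
end
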